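/- arXiv:2509.04426 — 8 statements merged into one kernel-verified Lean document; each statement's English description precedes it below -/
import Mathlib

section
/- Let X ⊂ ℝ^n and Y ⊂ ℝ^m be nonempty compact convex sets, Z := X × Y, and let f : Z → ℝ be differentiable, convex in its first argument for every fixed second argument and concave in its second argument for every fixed first argument. For z = (x, y) ∈ Z define gap(z) := max_{y'∈Y} f(x, y') − min_{x'∈X} f(x', y) and the gradient mapping ∇±f(z) := (∇_x f(z), −∇_y f(z)) ∈ ℝ^{n+m}. Then for any T ≥ 1, points w^1, …, w^T ∈ Z and weights ρ_1, …, ρ_T > 0, setting Λ := Σ_{t=1}^T ρ_t and w̄ := (1/Λ) Σ_{t=1}^T ρ_t w^t, one has gap(w̄) ≤ sup_{u ∈ Z} (1/Λ) Σ_{t=1}^T ρ_t ⟨∇±f(w^t), w^t − u⟩. -/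
/-!
For `u = (x, y) ∈ X × Y`, Jensen's inequality in each variable gives
`f (w̄₁, y) - f (x, w̄₂) ≤ Λ⁻¹ ∑ ρₜ (f (wₜ₁, y) - f (x, wₜ₂))`, and the first-order
inequalities for the convex `f (·, wₜ₂)` and the concave `f (wₜ₁, ·)` bound each summand by
`⟪∇±f (wₜ), wₜ - u⟫`. Taking the supremum over `y` and the infimum over `x` bounds the gap.
-/

open RealInnerProductSpace

variable {E : Type*} [NormedAddCommGroup E] [InnerProductSpace ℝ E] [CompleteSpace E]
  {s : Set E} {f : E → ℝ} {g x u : E}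

theorem HasGradientAt.hasDerivAt_comp_lineMap (hg : HasGradientAt f g x) :
    HasDerivAt (f ∘ AffineMap.lineMap (k := ℝ) x u) ⟪g, u - x⟫ 0 := by
  simpa using hg.hasFDerivAt.comp_hasDerivAt_of_eq (0 : ℝ) AffineMap.hasDerivAt_lineMap (by simp)

theorem ConvexOn.inner_sub_le_sub_of_hasGradientAt (hf : ConvexOn ℝ s f) (hx : x ∈ s)
    (hu : u ∈ s) (hg : HasGradientAt f g x) : ⟪g, u - x⟫ ≤ f u - f x := by
  simpa [slope_def_field] using
    (hf.comp_affineMap (AffineMap.lineMap x u)).le_slope_of_hasDerivAt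
      (by simpa using hx) (by simpa using hu) zero_lt_one hg.hasDerivAt_comp_lineMap

theorem ConcaveOn.sub_le_inner_sub_of_hasGradientAt (hf : ConcaveOn ℝ s f) (hx : x ∈ s)
    (hu : u ∈ s) (hg : HasGradientAt f g x) : f u - f x ≤ ⟪g, u - x⟫ := by
  simpa [slope_def_field] using
    (hf.comp_affineMap (AffineMap.lineMap x u)).slope_le_of_hasDerivAt
      (by simpa using hx) (by simpa using hu) zero_lt_one hg.hasDerivAt_comp_lineMap

theorem Finset.centerMass_sub_centerMass_le {ι : Type*} {t : Finset ι} {ρ a b c : ι → ℝ}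
    (hρ : ∀ i ∈ t, 0 ≤ ρ i) (h : ∀ i ∈ t, a i - b i ≤ c i) :
    t.centerMass ρ a - t.centerMass ρ b ≤ t.centerMass ρ c := by
  simp only [Finset.centerMass, smul_eq_mul, ← mul_sub, ← Finset.sum_sub_distrib]
  gcongr with i hi
  · exact inv_nonneg.2 (Finset.sum_nonneg hρ)
  · exact hρ i hi
  · exact h i hi

theorem csSup_sub_csInf_le {A B : Set ℝ} {c : ℝ} (hA : A.Nonempty) (hB : B.Nonempty)
    (h : ∀ a ∈ A, ∀ b ∈ B, a - b ≤ c) : sSup A - sInf B ≤ c := by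
  suffices sSup A ≤ sInf B + c by linarith
  refine csSup_le hA fun a ha => ?_
  have : a - c ≤ sInf B := le_csInf hB fun b hb => by linarith [h a ha b hb]
  linarith

variable {F : Type*} [NormedAddCommGroup F] [InnerProductSpace ℝ F] [CompleteSpace F]
  {X : Set E} {Y : Set F} {f : E × F → ℝ} {gx : E × F → E} {gy : E × F → F}

theorem sub_le_inner_gradient_sub_of_convexOn_concaveOn {z u : E × F}
    (hconvex : ConvexOn ℝ X (fun x => f (x, z.2))) (hconcave : ConcaveOn ℝ Y (fun y => f (z.1, y)))
    (hgx : HasGradientAt (fun x => f (x, z.2)) (gx z) z.1)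
    (hgy : HasGradientAt (fun y => f (z.1, y)) (gy z) z.2)
    (hz : z ∈ X ×ˢ Y) (hu : u ∈ X ×ˢ Y) :
    f (z.1, u.2) - f (u.1, z.2) ≤ ⟪gx z, z.1 - u.1⟫ - ⟪gy z, z.2 - u.2⟫ := by
  have hx := hconvex.inner_sub_le_sub_of_hasGradientAt hz.1 hu.1 hgx
  have hy := hconcave.sub_le_inner_sub_of_hasGradientAt hz.2 hu.2 hgy
  rw [← neg_sub z.1, inner_neg_right] at hx
  rw [← neg_sub z.2, inner_neg_right] at hy
  linarith

theorem sub_le_centerMass_inner_gradient_sub {ι : Type*} {t : Finset ι} {ρ : ι → ℝ}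
    {w : ι → E × F} {u : E × F}
    (hconvex : ∀ y ∈ Y, ConvexOn ℝ X (fun x => f (x, y)))
    (hconcave : ∀ x ∈ X, ConcaveOn ℝ Y (fun y => f (x, y)))
    (hgx : ∀ z ∈ X ×ˢ Y, HasGradientAt (fun x => f (x, z.2)) (gx z) z.1)
    (hgy : ∀ z ∈ X ×ˢ Y, HasGradientAt (fun y => f (z.1, y)) (gy z) z.2)
    (hρ : ∀ i ∈ t, 0 ≤ ρ i) (hρpos : 0 < ∑ i ∈ t, ρ i) (hw : ∀ i ∈ t, w i ∈ X ×ˢ Y)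
    (hu : u ∈ X ×ˢ Y) :
    f ((t.centerMass ρ w).1, u.2) - f (u.1, (t.centerMass ρ w).2)
      ≤ t.centerMass ρ (fun i => ⟪gx (w i), (w i).1 - u.1⟫ - ⟪gy (w i), (w i).2 - u.2⟫) := by
  have hfst : (t.centerMass ρ w).1 = t.centerMass ρ (fun i => (w i).1) := by
    simp [Finset.centerMass, Prod.fst_sum]
  have hsnd : (t.centerMass ρ w).2 = t.centerMass ρ (fun i => (w i).2) := by
    simp [Finset.centerMass, Prod.snd_sum]
  have jensen_x := (hconvex u.2 hu.2).map_centerMass_le hρ hρpos fun i hi => (hw i hi).1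
  have jensen_y := (hconcave u.1 hu.1).le_map_centerMass hρ hρpos fun i hi => (hw i hi).2
  rw [hfst, hsnd]
  refine (sub_le_sub jensen_x jensen_y).trans (Finset.centerMass_sub_centerMass_le hρ ?_)
  intro i hi
  exact sub_le_inner_gradient_sub_of_convexOn_concaveOn (hconvex _ (hw i hi).2)
    (hconcave _ (hw i hi).1) (hgx _ (hw i hi)) (hgy _ (hw i hi)) (hw i hi) hu

theorem stmt0_general {n m : ℕ}
    (X : Set (EuclideanSpace ℝ (Fin n))) (Y : Set (EuclideanSpace ℝ (Fin m)))
    (hXcomp : IsCompact X)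
    (hYcomp : IsCompact Y)
    (f : EuclideanSpace ℝ (Fin n) × EuclideanSpace ℝ (Fin m) → ℝ)
    (gx : EuclideanSpace ℝ (Fin n) × EuclideanSpace ℝ (Fin m) → EuclideanSpace ℝ (Fin n))
    (gy : EuclideanSpace ℝ (Fin n) × EuclideanSpace ℝ (Fin m) → EuclideanSpace ℝ (Fin m))
    (hgx : ∀ z ∈ X ×ˢ Y, HasGradientAt (fun x => f (x, z.2)) (gx z) z.1)
    (hgy : ∀ z ∈ X ×ˢ Y, HasGradientAt (fun y => f (z.1, y)) (gy z) z.2)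
    (hconvex : ∀ y ∈ Y, ConvexOn ℝ X (fun x => f (x, y)))
    (hconcave : ∀ x ∈ X, ConcaveOn ℝ Y (fun y => f (x, y)))
    (T : ℕ) (hT : 1 ≤ T)
    (w : Fin T → EuclideanSpace ℝ (Fin n) × EuclideanSpace ℝ (Fin m))
    (hw : ∀ t, w t ∈ X ×ˢ Y)
    (ρ : Fin T → ℝ) (hρ : ∀ t, 0 < ρ t)
    (Λ : ℝ) (hΛ : Λ = ∑ t, ρ t)
    (wbar : EuclideanSpace ℝ (Fin n) × EuclideanSpace ℝ (Fin m))
    (hwbar : wbar = Λ⁻¹ • ∑ t, ρ t • w t) :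
    sSup ((fun y' => f (wbar.1, y')) '' Y) - sInf ((fun x' => f (x', wbar.2)) '' X)
      ≤ sSup ((fun u : EuclideanSpace ℝ (Fin n) × EuclideanSpace ℝ (Fin m) =>
          Λ⁻¹ * ∑ t, ρ t * (⟪gx (w t), (w t).1 - u.1⟫ - ⟪gy (w t), (w t).2 - u.2⟫))
          '' (X ×ˢ Y)) := by
  have hXne : X.Nonempty := ⟨_, (hw ⟨0, hT⟩).1⟩
  have hYne : Y.Nonempty := ⟨_, (hw ⟨0, hT⟩).2⟩
  have hΛpos : 0 < ∑ t, ρ t := Finset.sum_pos (fun t _ => hρ t) ⟨⟨0, hT⟩, Finset.mem_univ _⟩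
  subst hΛ hwbar
  set R := fun u : EuclideanSpace ℝ (Fin n) × EuclideanSpace ℝ (Fin m) =>
    (∑ t, ρ t)⁻¹ * ∑ t, ρ t * (⟪gx (w t), (w t).1 - u.1⟫ - ⟪gy (w t), (w t).2 - u.2⟫)
  have hRbdd : BddAbove (R '' (X ×ˢ Y)) :=
    ((hXcomp.prod hYcomp).image (by fun_prop)).bddAbove
  refine csSup_sub_csInf_le (hYne.image _) (hXne.image _) ?_
  rintro _ ⟨y, hy, rfl⟩ _ ⟨x, hx, rfl⟩
  exact (sub_le_centerMass_inner_gradient_sub (u := (x, y)) hconvex hconcave hgx hgy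
    (fun t _ => (hρ t).le) hΛpos (fun t _ => hw t) ⟨hx, hy⟩).trans
    (le_csSup hRbdd ⟨(x, y), ⟨hx, hy⟩, rfl⟩)

/-- For a differentiable convex-concave function `f` on `Z = X × Y` with
`X ⊂ ℝ^n`, `Y ⊂ ℝ^m` nonempty compact convex, the gap of the weighted average iterate
is bounded by the weighted regret with respect to the gradient mapping
`∇±f(z) = (∇_x f(z), −∇_y f(z))`. -/
theorem stmt0 {n m : ℕ}
    (X : Set (EuclideanSpace ℝ (Fin n))) (Y : Set (EuclideanSpace ℝ (Fin m)))
    (hXne : X.Nonempty) (hXcomp : IsCompact X) (hXconv : Convex ℝ X)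
    (hYne : Y.Nonempty) (hYcomp : IsCompact Y) (hYconv : Convex ℝ Y)
    (f : EuclideanSpace ℝ (Fin n) × EuclideanSpace ℝ (Fin m) → ℝ)
    (gx : EuclideanSpace ℝ (Fin n) × EuclideanSpace ℝ (Fin m) → EuclideanSpace ℝ (Fin n))
    (gy : EuclideanSpace ℝ (Fin n) × EuclideanSpace ℝ (Fin m) → EuclideanSpace ℝ (Fin m))
    (hgx : ∀ z ∈ X ×ˢ Y, HasGradientAt (fun x => f (x, z.2)) (gx z) z.1)
    (hgy : ∀ z ∈ X ×ˢ Y, HasGradientAt (fun y => f (z.1, y)) (gy z) z.2)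
    (hconvex : ∀ y ∈ Y, ConvexOn ℝ X (fun x => f (x, y)))
    (hconcave : ∀ x ∈ X, ConcaveOn ℝ Y (fun y => f (x, y)))
    (T : ℕ) (hT : 1 ≤ T)
    (w : Fin T → EuclideanSpace ℝ (Fin n) × EuclideanSpace ℝ (Fin m))
    (hw : ∀ t, w t ∈ X ×ˢ Y)
    (ρ : Fin T → ℝ) (hρ : ∀ t, 0 < ρ t)
    (Λ : ℝ) (hΛ : Λ = ∑ t, ρ t)
    (wbar : EuclideanSpace ℝ (Fin n) × EuclideanSpace ℝ (Fin m))
    (hwbar : wbar = Λ⁻¹ • ∑ t, ρ t • w t) :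
    sSup ((fun y' => f (wbar.1, y')) '' Y) - sInf ((fun x' => f (x', wbar.2)) '' X)
      ≤ sSup ((fun u : EuclideanSpace ℝ (Fin n) × EuclideanSpace ℝ (Fin m) =>
          Λ⁻¹ * ∑ t, ρ t * (⟪gx (w t), (w t).1 - u.1⟫ - ⟪gy (w t), (w t).2 - u.2⟫))
          '' (X ×ˢ Y)) :=
  stmt0_general X Y hXcomp hYcomp f gx gy hgx hgy hconvex hconcave T hT w hw ρ hρ Λ hΛ wbar hwbar
end

section
/- Let n, m ≥ 1, let 𝔹^n and 𝔹^m denote the Euclidean unit balls, Z := 𝔹^n × 𝔹^m ⊂ ℝ^{n+m}, and write z = (z_x, z_y) ∈ ℝ^n × ℝ^m for z ∈ Z. Let B ∈ ℝ^{m×n}, τ > 0, and let ψ : Z → ℝ be differentiable, convex in z_x for each fixed z_y and concave in z_y for each fixed z_x, with gradient mapping ∇±ψ(z) := (∇_x ψ(z), −∇_y ψ(z)); set ∇±f_B(z) := (Bᵀ z_y, −B z_x). Fix z, w, z' ∈ Z and suppose that for all u ∈ Z: ⟨∇±f_B(z) + ∇±ψ(w), w − u⟩ ≤ τ·(½‖z−u‖₂²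 − ½‖w−u‖₂² − ½‖z−w‖₂²) and ⟨∇±f_B(w) + ∇±ψ(w), z' − u⟩ ≤ τ·(½‖z−u‖₂² − ½‖z'−u‖₂² − ½‖z−z'‖₂²). Set z¹ := (w_x − z'_x, w_y − z_y) and z² := (z_x − w_x, w_y − z'_y). Then at least one of the following holds: (a) for all u ∈ Z, ⟨∇±f_B(w) + ∇±ψ(w), w − u⟩ ≤ τ·(½‖z−u‖₂² − ½‖z'−u‖₂²); (b) (z¹_y)ᵀ B z¹_x ≥ τ‖z¹_y‖₂‖z¹_x‖₂; (c) (z²_y)ᵀ B z²_x ≥ τ‖z²_y‖₂‖z²_x‖₂. -/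
/-! Adding the first prox inequality at `u = z'` to the second one at `u`, the gradient terms
telescope to the gradient at `w`, up to the two bilinear errors `⟨B z¹_x, z¹_y⟩ + ⟨B z²_x, z²_y⟩`
and the loss `τ (V_z(w) + V_w(z'))`. If (b) and (c) fail, AM-GM bounds each error by `τ / 2`
times the squared norms of its components, and these add up to exactly that loss. -/

open Matrix RealInnerProductSpace

/-- Matrix-vector product viewed as a map between Euclidean spaces. -/
noncomputable def mulVecE {m n : ℕ} (B : Matrix (Fin m) (Fin n) ℝ)
    (x : EuclideanSpace ℝ (Fin n)) : EuclideanSpace ℝ (Fin m) :=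
  WithLp.toLp 2 (B.mulVec x)

noncomputable def halfSqDist {E F : Type*} [SeminormedAddCommGroup E] [SeminormedAddCommGroup F]
    (z u : E × F) : ℝ :=
  1 / 2 * ‖z.1 - u.1‖ ^ 2 + 1 / 2 * ‖z.2 - u.2‖ ^ 2

section MirrorProx

variable {E F : Type*} [NormedAddCommGroup E] [InnerProductSpace ℝ E] [FiniteDimensional ℝ E]
  [NormedAddCommGroup F] [InnerProductSpace ℝ F] [FiniteDimensional ℝ F]
  (L : E →ₗ[ℝ] F) (gx : E) (gy : F) (z w z' u : E × F)

lemma mirrorProx_inner_gradient_eq :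
    ⟪LinearMap.adjoint L w.2 + gx, w.1 - u.1⟫ + ⟪-L w.1 - gy, w.2 - u.2⟫ =
      (⟪LinearMap.adjoint L w.2 + gx, z'.1 - u.1⟫ + ⟪-L w.1 - gy, z'.2 - u.2⟫)
      + (⟪LinearMap.adjoint L z.2 + gx, w.1 - z'.1⟫ + ⟪-L z.1 - gy, w.2 - z'.2⟫)
      + ⟪L (w.1 - z'.1), w.2 - z.2⟫ + ⟪L (z.1 - w.1), w.2 - z'.2⟫ := by
  simp only [map_sub, inner_add_left, inner_sub_left, inner_sub_right, inner_neg_left,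
    LinearMap.adjoint_inner_left, real_inner_comm (L _)]
  ring

lemma mirrorProx_inner_gradient_le {τ : ℝ} (hτ : 0 ≤ τ)
    (hb : ⟪L (w.1 - z'.1), w.2 - z.2⟫ < τ * (‖w.2 - z.2‖ * ‖w.1 - z'.1‖))
    (hc : ⟪L (z.1 - w.1), w.2 - z'.2⟫ < τ * (‖w.2 - z'.2‖ * ‖z.1 - w.1‖))
    (hstep1 : ⟪LinearMap.adjoint L z.2 + gx, w.1 - z'.1⟫ + ⟪-L z.1 - gy, w.2 - z'.2⟫
      ≤ τ * (halfSqDist z z' - halfSqDist w z' - halfSqDist z w))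
    (hstep2 : ⟪LinearMap.adjoint L w.2 + gx, z'.1 - u.1⟫ + ⟪-L w.1 - gy, z'.2 - u.2⟫
      ≤ τ * (halfSqDist z u - halfSqDist z' u - halfSqDist z z')) :
    ⟪LinearMap.adjoint L w.2 + gx, w.1 - u.1⟫ + ⟪-L w.1 - gy, w.2 - u.2⟫
      ≤ τ * (halfSqDist z u - halfSqDist z' u) := by
  have amgm (a b : ℝ) : τ * (a * b) ≤ τ * (1 / 2 * a ^ 2 + 1 / 2 * b ^ 2) :=
    mul_le_mul_of_nonneg_left (by linarith [two_mul_le_add_sq a b]) hτ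
  have hb' := hb.le.trans (amgm _ _)
  have hc' := hc.le.trans (amgm _ _)
  rw [norm_sub_rev w.2 z.2] at hb'
  rw [mirrorProx_inner_gradient_eq L gx gy z w z' u]
  unfold halfSqDist at *
  linarith

end MirrorProx

lemma mulVecE_eq_toEuclideanLin {m n : ℕ} (B : Matrix (Fin m) (Fin n) ℝ)
    (x : EuclideanSpace ℝ (Fin n)) : mulVecE B x = toEuclideanLin B x :=
  rfl

lemma toEuclideanLin_transpose_eq_adjoint {m n : ℕ} (B : Matrix (Fin m) (Fin n) ℝ) :
    toEuclideanLin Bᵀ = LinearMap.adjoint (toEuclideanLin B) := by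
  rw [← conjTranspose_eq_transpose_of_trivial, toEuclideanLin_conjTranspose_eq_adjoint]

theorem stmt2_general {n m : ℕ}
    (B : Matrix (Fin m) (Fin n) ℝ) (τ : ℝ) (hτ : 0 < τ)
    (gψx : EuclideanSpace ℝ (Fin n) × EuclideanSpace ℝ (Fin m) → EuclideanSpace ℝ (Fin n))
    (gψy : EuclideanSpace ℝ (Fin n) × EuclideanSpace ℝ (Fin m) → EuclideanSpace ℝ (Fin m))
    (z w z' : EuclideanSpace ℝ (Fin n) × EuclideanSpace ℝ (Fin m))
    (hz'1 : z'.1 ∈ Metric.closedBall (0 : EuclideanSpace ℝ (Fin n)) 1)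
    (hz'2 : z'.2 ∈ Metric.closedBall (0 : EuclideanSpace ℝ (Fin m)) 1)
    (hstep1 : ∀ u : EuclideanSpace ℝ (Fin n) × EuclideanSpace ℝ (Fin m),
      u.1 ∈ Metric.closedBall (0 : EuclideanSpace ℝ (Fin n)) 1 →
      u.2 ∈ Metric.closedBall (0 : EuclideanSpace ℝ (Fin m)) 1 →
      ⟪mulVecE Bᵀ z.2 + gψx w, w.1 - u.1⟫ + ⟪-mulVecE B z.1 - gψy w, w.2 - u.2⟫
        ≤ τ * ((1 / 2 * ‖z.1 - u.1‖ ^ 2 + 1 / 2 * ‖z.2 - u.2‖ ^ 2)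
             - (1 / 2 * ‖w.1 - u.1‖ ^ 2 + 1 / 2 * ‖w.2 - u.2‖ ^ 2)
             - (1 / 2 * ‖z.1 - w.1‖ ^ 2 + 1 / 2 * ‖z.2 - w.2‖ ^ 2)))
    (hstep2 : ∀ u : EuclideanSpace ℝ (Fin n) × EuclideanSpace ℝ (Fin m),
      u.1 ∈ Metric.closedBall (0 : EuclideanSpace ℝ (Fin n)) 1 →
      u.2 ∈ Metric.closedBall (0 : EuclideanSpace ℝ (Fin m)) 1 →
      ⟪mulVecE Bᵀ w.2 + gψx w, z'.1 - u.1⟫ + ⟪-mulVecE B w.1 - gψy w, z'.2 - u.2⟫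
        ≤ τ * ((1 / 2 * ‖z.1 - u.1‖ ^ 2 + 1 / 2 * ‖z.2 - u.2‖ ^ 2)
             - (1 / 2 * ‖z'.1 - u.1‖ ^ 2 + 1 / 2 * ‖z'.2 - u.2‖ ^ 2)
             - (1 / 2 * ‖z.1 - z'.1‖ ^ 2 + 1 / 2 * ‖z.2 - z'.2‖ ^ 2))) :
    (∀ u : EuclideanSpace ℝ (Fin n) × EuclideanSpace ℝ (Fin m),
        u.1 ∈ Metric.closedBall (0 : EuclideanSpace ℝ (Fin n)) 1 →
        u.2 ∈ Metric.closedBall (0 : EuclideanSpace ℝ (Fin m)) 1 →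
        ⟪mulVecE Bᵀ w.2 + gψx w, w.1 - u.1⟫ + ⟪-mulVecE B w.1 - gψy w, w.2 - u.2⟫
          ≤ τ * ((1 / 2 * ‖z.1 - u.1‖ ^ 2 + 1 / 2 * ‖z.2 - u.2‖ ^ 2)
               - (1 / 2 * ‖z'.1 - u.1‖ ^ 2 + 1 / 2 * ‖z'.2 - u.2‖ ^ 2)))
    ∨ τ * (‖w.2 - z.2‖ * ‖w.1 - z'.1‖) ≤ ⟪mulVecE B (w.1 - z'.1), w.2 - z.2⟫
    ∨ τ * (‖w.2 - z'.2‖ * ‖z.1 - w.1‖) ≤ ⟪mulVecE B (z.1 - w.1), w.2 - z'.2⟫ := by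
  refine or_iff_not_imp_right.2 fun hbc u hu1 hu2 => ?_
  obtain ⟨hb, hc⟩ : _ ∧ _ := by simpa only [not_or, not_le] using hbc
  simp only [mulVecE_eq_toEuclideanLin, toEuclideanLin_transpose_eq_adjoint] at hb hc hstep1 hstep2 ⊢
  exact mirrorProx_inner_gradient_le _ (gψx w) (gψy w) z w z' u hτ.le hb hc
    (hstep1 z' hz'1 hz'2) (hstep2 u hu1 hu2)

/-- Smooth-until-guilty mirror prox step dichotomy in the ℓ₂-ℓ₂ setup:
either the mirror prox step makes progress (the variational inequality (a) holds for all
`u ∈ Z = 𝔹^n × 𝔹^m`), or one of the two test pairs reveals a `τ`-large component of `B`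
((b) or (c)). -/
theorem stmt2 {n m : ℕ} (hn : 1 ≤ n) (hm : 1 ≤ m)
    (B : Matrix (Fin m) (Fin n) ℝ) (τ : ℝ) (hτ : 0 < τ)
    (ψ : EuclideanSpace ℝ (Fin n) × EuclideanSpace ℝ (Fin m) → ℝ)
    (gψx : EuclideanSpace ℝ (Fin n) × EuclideanSpace ℝ (Fin m) → EuclideanSpace ℝ (Fin n))
    (gψy : EuclideanSpace ℝ (Fin n) × EuclideanSpace ℝ (Fin m) → EuclideanSpace ℝ (Fin m))
    (hgx : ∀ z : EuclideanSpace ℝ (Fin n) × EuclideanSpace ℝ (Fin m),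
      z.1 ∈ Metric.closedBall (0 : EuclideanSpace ℝ (Fin n)) 1 →
      z.2 ∈ Metric.closedBall (0 : EuclideanSpace ℝ (Fin m)) 1 →
      HasGradientAt (fun x => ψ (x, z.2)) (gψx z) z.1)
    (hgy : ∀ z : EuclideanSpace ℝ (Fin n) × EuclideanSpace ℝ (Fin m),
      z.1 ∈ Metric.closedBall (0 : EuclideanSpace ℝ (Fin n)) 1 →
      z.2 ∈ Metric.closedBall (0 : EuclideanSpace ℝ (Fin m)) 1 →
      HasGradientAt (fun y => ψ (z.1, y)) (gψy z) z.2)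
    (hconv : ∀ y ∈ Metric.closedBall (0 : EuclideanSpace ℝ (Fin m)) 1,
      ConvexOn ℝ (Metric.closedBall (0 : EuclideanSpace ℝ (Fin n)) 1) (fun x => ψ (x, y)))
    (hconc : ∀ x ∈ Metric.closedBall (0 : EuclideanSpace ℝ (Fin n)) 1,
      ConcaveOn ℝ (Metric.closedBall (0 : EuclideanSpace ℝ (Fin m)) 1) (fun y => ψ (x, y)))
    (z w z' : EuclideanSpace ℝ (Fin n) × EuclideanSpace ℝ (Fin m))
    (hz1 : z.1 ∈ Metric.closedBall (0 : EuclideanSpace ℝ (Fin n)) 1)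
    (hz2 : z.2 ∈ Metric.closedBall (0 : EuclideanSpace ℝ (Fin m)) 1)
    (hw1 : w.1 ∈ Metric.closedBall (0 : EuclideanSpace ℝ (Fin n)) 1)
    (hw2 : w.2 ∈ Metric.closedBall (0 : EuclideanSpace ℝ (Fin m)) 1)
    (hz'1 : z'.1 ∈ Metric.closedBall (0 : EuclideanSpace ℝ (Fin n)) 1)
    (hz'2 : z'.2 ∈ Metric.closedBall (0 : EuclideanSpace ℝ (Fin m)) 1)
    (hstep1 : ∀ u : EuclideanSpace ℝ (Fin n) × EuclideanSpace ℝ (Fin m),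
      u.1 ∈ Metric.closedBall (0 : EuclideanSpace ℝ (Fin n)) 1 →
      u.2 ∈ Metric.closedBall (0 : EuclideanSpace ℝ (Fin m)) 1 →
      ⟪mulVecE Bᵀ z.2 + gψx w, w.1 - u.1⟫ + ⟪-mulVecE B z.1 - gψy w, w.2 - u.2⟫
        ≤ τ * ((1 / 2 * ‖z.1 - u.1‖ ^ 2 + 1 / 2 * ‖z.2 - u.2‖ ^ 2)
             - (1 / 2 * ‖w.1 - u.1‖ ^ 2 + 1 / 2 * ‖w.2 - u.2‖ ^ 2)
             - (1 / 2 * ‖z.1 - w.1‖ ^ 2 + 1 / 2 * ‖z.2 - w.2‖ ^ 2)))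
    (hstep2 : ∀ u : EuclideanSpace ℝ (Fin n) × EuclideanSpace ℝ (Fin m),
      u.1 ∈ Metric.closedBall (0 : EuclideanSpace ℝ (Fin n)) 1 →
      u.2 ∈ Metric.closedBall (0 : EuclideanSpace ℝ (Fin m)) 1 →
      ⟪mulVecE Bᵀ w.2 + gψx w, z'.1 - u.1⟫ + ⟪-mulVecE B w.1 - gψy w, z'.2 - u.2⟫
        ≤ τ * ((1 / 2 * ‖z.1 - u.1‖ ^ 2 + 1 / 2 * ‖z.2 - u.2‖ ^ 2)
             - (1 / 2 * ‖z'.1 - u.1‖ ^ 2 + 1 / 2 * ‖z'.2 - u.2‖ ^ 2)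
             - (1 / 2 * ‖z.1 - z'.1‖ ^ 2 + 1 / 2 * ‖z.2 - z'.2‖ ^ 2))) :
    (∀ u : EuclideanSpace ℝ (Fin n) × EuclideanSpace ℝ (Fin m),
        u.1 ∈ Metric.closedBall (0 : EuclideanSpace ℝ (Fin n)) 1 →
        u.2 ∈ Metric.closedBall (0 : EuclideanSpace ℝ (Fin m)) 1 →
        ⟪mulVecE Bᵀ w.2 + gψx w, w.1 - u.1⟫ + ⟪-mulVecE B w.1 - gψy w, w.2 - u.2⟫
          ≤ τ * ((1 / 2 * ‖z.1 - u.1‖ ^ 2 + 1 / 2 * ‖z.2 - u.2‖ ^ 2)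
               - (1 / 2 * ‖z'.1 - u.1‖ ^ 2 + 1 / 2 * ‖z'.2 - u.2‖ ^ 2)))
    ∨ τ * (‖w.2 - z.2‖ * ‖w.1 - z'.1‖) ≤ ⟪mulVecE B (w.1 - z'.1), w.2 - z.2⟫
    ∨ τ * (‖w.2 - z'.2‖ * ‖z.1 - w.1‖) ≤ ⟪mulVecE B (z.1 - w.1), w.2 - z'.2⟫ :=
  stmt2_general B τ hτ gψx gψy z w z' hz'1 hz'2 hstep1 hstep2
end

section
/- Let c ≥ 1 and let x̃, x, x', x_n be probability vectors in ℝ^n with all entries strictly positive, such that each of x, x', x_n is entrywise c-multiplicatively close to x̃, i.e. x̃_i/c ≤ x_i ≤ c·x̃_i for all i ∈ [n], and likewise for x' and x_n. Define q_c := c² · max{ (∫₀¹ (1−t)/((1−t) + t c⁴) dt)⁻¹ , ∫₀¹ (1−t)/((1−t) + t/c⁴) dt }. Then, with Q := Σ_{i=1}^n (x_i − x'_i)²/(x_n)_i, one has Q/q_c ≤ KL(x'‖x) ≤ q_c · Q. -/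
open MeasureTheory intervalIntegral

/-- The constant `q_c` from the paper:
`q_c := c² · max{ (∫₀¹ (1−t)/((1−t)+tc⁴) dt)⁻¹ , ∫₀¹ (1−t)/((1−t)+t/c⁴) dt }`. -/
noncomputable def qc (c : ℝ) : ℝ :=
  c ^ 2 * max (∫ t in (0:ℝ)..1, (1 - t) / ((1 - t) + t * c ^ 4))⁻¹
              (∫ t in (0:ℝ)..1, (1 - t) / ((1 - t) + t / c ^ 4))

noncomputable def Ifun (s : ℝ) : ℝ := ∫ t in (0:ℝ)..1, (1 - t) / ((1 - t) + t * s)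

lemma denom_pos {s t : ℝ} (hs : 0 < s) (h0 : 0 ≤ t) (h1 : t ≤ 1) :
    0 < (1 - t) + t * s := by
  rcases le_total s 1 with h | h
  · nlinarith
  · nlinarith

lemma Ifun_intble {s : ℝ} (hs : 0 < s) :
    IntervalIntegrable (fun t => (1 - t) / ((1 - t) + t * s)) volume 0 1 := by
  apply ContinuousOn.intervalIntegrable
  apply ContinuousOn.div (by fun_prop) (by fun_prop)
  intro t ht
  rw [Set.uIcc_of_le (by norm_num : (0:ℝ) ≤ 1)] at ht
  exact (denom_pos hs ht.1 ht.2).ne'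

lemma Ifun_pos {s : ℝ} (hs : 0 < s) : 0 < Ifun s := by
  apply intervalIntegral.intervalIntegral_pos_of_pos_on (Ifun_intble hs)
  · intro t ht
    exact div_pos (by linarith [ht.2]) (denom_pos hs ht.1.le ht.2.le)
  · norm_num

lemma Ifun_anti {s s' : ℝ} (hs : 0 < s) (hss' : s ≤ s') : Ifun s' ≤ Ifun s := by
  have hs' : 0 < s' := lt_of_lt_of_le hs hss'
  apply intervalIntegral.integral_mono_on (by norm_num) (Ifun_intble hs') (Ifun_intble hs)
  intro t ht
  have h1 : 0 < (1 - t) + t * s := denom_pos hs ht.1 ht.2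
  have h2 : (1 - t) + t * s ≤ (1 - t) + t * s' := by nlinarith [ht.1]
  exact div_le_div_of_nonneg_left (by linarith [ht.2]) h1 h2 |>.trans_eq rfl

lemma denom_pos' {a b t : ℝ} (ha : 0 < a) (hb : 0 < b) (h0 : 0 ≤ t) (h1 : t ≤ 1) :
    0 < (1 - t) * a + t * b := by
  rcases le_total a b with h | h
  · nlinarith
  · nlinarith

lemma key_identity (a b : ℝ) (ha : 0 < a) (hb : 0 < b) :
    b * Real.log (b / a) - (b - a) =
      (b - a) ^ 2 * ∫ t in (0:ℝ)..1, (1 - t) / ((1 - t) * a + t * b) := by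
  rcases eq_or_ne b a with h | h
  · subst h; simp [div_self ha.ne']
  · set d : ℝ := b - a with hd
    have hdne : d ≠ 0 := sub_ne_zero.mpr h
    have hint : IntervalIntegrable (fun t => (1 - t) / ((1 - t) * a + t * b)) volume 0 1 := by
      apply ContinuousOn.intervalIntegrable
      apply ContinuousOn.div (by fun_prop) (by fun_prop)
      intro t ht
      rw [Set.uIcc_of_le (by norm_num : (0:ℝ) ≤ 1)] at ht
      exact (denom_pos' ha hb ht.1 ht.2).ne'
    have hderiv : ∀ t ∈ Set.uIcc (0:ℝ) 1,
        HasDerivAt (fun t => -(t/d) + ((a+d)/d^2) * Real.log (a + t*d))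
          ((1 - t) / ((1 - t) * a + t * b)) t := by
      intro t ht
      rw [Set.uIcc_of_le (by norm_num : (0:ℝ) ≤ 1)] at ht
      have hpos : 0 < a + t * d := by
        have h' := denom_pos' ha hb ht.1 ht.2
        have : a + t * d = (1 - t) * a + t * b := by rw [hd]; ring
        linarith
      have h1 : HasDerivAt (fun t : ℝ => a + t * d) d t := by
        simpa using ((hasDerivAt_id t).mul_const d).const_add a
      have h2 : HasDerivAt (fun t : ℝ => Real.log (a + t * d)) (d / (a + t * d)) t :=
        h1.log hpos.ne'
      have h3 : HasDerivAt (fun t : ℝ => -(t/d) + ((a+d)/d^2) * Real.log (a + t*d))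
          (-(1/d) + ((a+d)/d^2) * (d / (a + t * d))) t := by
        exact ((hasDerivAt_id t).div_const d).neg.add (h2.const_mul _)
      convert h3 using 1
      have hden : (1 - t) * a + t * b = a + t * d := by rw [hd]; ring
      rw [hden]
      field_simp
      ring
    have hFTC := intervalIntegral.integral_eq_sub_of_hasDerivAt hderiv hint
    rw [hFTC]
    have hb' : a + 1 * d = b := by rw [hd]; ring
    have hlog : Real.log (b / a) = Real.log b - Real.log a := Real.log_div hb.ne' ha.ne'
    rw [hb']
    simp only [one_mul, zero_mul, add_zero, zero_div, neg_zero, zero_add]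
    rw [hlog]
    field_simp
    ring

lemma rescale (a b : ℝ) (ha : 0 < a) (hb : 0 < b) :
    (∫ t in (0:ℝ)..1, (1 - t) / ((1 - t) * a + t * b)) = a⁻¹ * Ifun (b / a) := by
  rw [Ifun, ← intervalIntegral.integral_const_mul]
  apply intervalIntegral.integral_congr
  intro t ht
  rw [Set.uIcc_of_le (by norm_num : (0:ℝ) ≤ 1)] at ht
  have h1 : 0 < (1 - t) * a + t * b := denom_pos' ha hb ht.1 ht.2
  have h2 : 0 < (1 - t) + t * (b / a) := denom_pos (div_pos hb ha) ht.1 ht.2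
  field_simp

lemma qc_eq (c : ℝ) : qc c = c ^ 2 * max (Ifun (c ^ 4))⁻¹ (Ifun ((c ^ 4)⁻¹)) := by
  simp [qc, Ifun, div_eq_mul_inv]

lemma per_index (c a b w : ℝ) (hc : 1 ≤ c) (ha : 0 < a) (hb : 0 < b) (hw : 0 < w)
    (hba : b ≤ c ^ 4 * a) (hab : a ≤ c ^ 4 * b)
    (haw : a ≤ c ^ 2 * w) (hwa : w ≤ c ^ 2 * a) :
    (a - b) ^ 2 / w ≤ qc c * (b * Real.log (b / a) - (b - a)) ∧
    b * Real.log (b / a) - (b - a) ≤ qc c * ((a - b) ^ 2 / w) := by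
  have hc0 : 0 < c := lt_of_lt_of_le one_pos hc
  have hK : 0 < c ^ 4 := by positivity
  have hKi : 0 < (c ^ 4)⁻¹ := by positivity
  have hs : 0 < b / a := div_pos hb ha
  have hs2 : b / a ≤ c ^ 4 := (div_le_iff₀ ha).2 (by linarith)
  have hs1 : (c ^ 4)⁻¹ ≤ b / a := by
    rw [le_div_iff₀ ha, inv_mul_le_iff₀ hK]
    linarith
  have hIK : 0 < Ifun (c ^ 4) := Ifun_pos hK
  have hIKi : 0 < Ifun ((c ^ 4)⁻¹) := Ifun_pos hKi
  have hIs : 0 < Ifun (b / a) := Ifun_pos hs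
  have hI1 : Ifun (c ^ 4) ≤ Ifun (b / a) := Ifun_anti hs hs2
  have hI2 : Ifun (b / a) ≤ Ifun ((c ^ 4)⁻¹) := Ifun_anti hKi hs1
  have hterm : b * Real.log (b / a) - (b - a) = (b - a) ^ 2 * (a⁻¹ * Ifun (b / a)) := by
    rw [key_identity a b ha hb, rescale a b ha hb]
  have hqc_pos : 0 < qc c := by
    rw [qc_eq]
    exact mul_pos (by positivity) (lt_of_lt_of_le (inv_pos.2 hIK) (le_max_left _ _))
  constructor
  · -- lower bound : Q ≤ qc * term
    have hainv : (c ^ 2 * w)⁻¹ ≤ a⁻¹ := by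
      apply inv_anti₀ ha haw
    have hterm_ge : (b - a) ^ 2 * ((c ^ 2 * w)⁻¹ * Ifun (c ^ 4)) ≤
        b * Real.log (b / a) - (b - a) := by
      rw [hterm]
      apply mul_le_mul_of_nonneg_left _ (sq_nonneg _)
      exact mul_le_mul hainv hI1 hIK.le (inv_nonneg.2 ha.le)
    have hqK : c ^ 2 ≤ qc c * Ifun (c ^ 4) := by
      have hge : c ^ 2 * (Ifun (c ^ 4))⁻¹ ≤ qc c := by
        rw [qc_eq]
        exact mul_le_mul_of_nonneg_left (le_max_left _ _) (by positivity)
      have h := mul_le_mul_of_nonneg_right hge hIK.le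
      calc c ^ 2 = c ^ 2 * (Ifun (c ^ 4))⁻¹ * Ifun (c ^ 4) := by
            field_simp
        _ ≤ qc c * Ifun (c ^ 4) := h
    have key : (a - b) ^ 2 / w ≤ qc c * ((b - a) ^ 2 * ((c ^ 2 * w)⁻¹ * Ifun (c ^ 4))) := by
      have h1 : (1:ℝ) ≤ qc c * Ifun (c ^ 4) / c ^ 2 := by
        rw [le_div_iff₀ (by positivity : (0:ℝ) < c ^ 2)]
        linarith
      have heq : qc c * ((b - a) ^ 2 * ((c ^ 2 * w)⁻¹ * Ifun (c ^ 4))) =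
          (qc c * Ifun (c ^ 4) / c ^ 2) * ((a - b) ^ 2 / w) := by
        field_simp
        ring
      rw [heq]
      calc (a - b) ^ 2 / w = 1 * ((a - b) ^ 2 / w) := (one_mul _).symm
        _ ≤ _ := mul_le_mul_of_nonneg_right h1 (by positivity)
    exact key.trans (mul_le_mul_of_nonneg_left hterm_ge hqc_pos.le)
  · -- upper bound : term ≤ qc * Q
    have ha_inv : a⁻¹ ≤ c ^ 2 / w := by
      rw [inv_eq_one_div, div_le_div_iff₀ ha hw]
      nlinarith
    have h1 : a⁻¹ * Ifun (b / a) ≤ (c ^ 2 / w) * Ifun ((c ^ 4)⁻¹) :=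
      mul_le_mul ha_inv hI2 hIs.le (by positivity)
    have h2 : (b - a) ^ 2 * (a⁻¹ * Ifun (b / a)) ≤
        (b - a) ^ 2 * ((c ^ 2 / w) * Ifun ((c ^ 4)⁻¹)) :=
      mul_le_mul_of_nonneg_left h1 (sq_nonneg _)
    have heq : (b - a) ^ 2 * ((c ^ 2 / w) * Ifun ((c ^ 4)⁻¹)) =
        (c ^ 2 * Ifun ((c ^ 4)⁻¹)) * ((a - b) ^ 2 / w) := by
      field_simp
      ring
    have hge : c ^ 2 * Ifun ((c ^ 4)⁻¹) ≤ qc c := by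
      rw [qc_eq]
      exact mul_le_mul_of_nonneg_left (le_max_right _ _) (by positivity)
    rw [hterm]
    calc (b - a) ^ 2 * (a⁻¹ * Ifun (b / a))
        ≤ (b - a) ^ 2 * ((c ^ 2 / w) * Ifun ((c ^ 4)⁻¹)) := h2
      _ = (c ^ 2 * Ifun ((c ^ 4)⁻¹)) * ((a - b) ^ 2 / w) := heq
      _ ≤ qc c * ((a - b) ^ 2 / w) := mul_le_mul_of_nonneg_right hge (by positivity)

/-- For `c ≥ 1` and positive probability vectors `x̃, x, x', x_n` with
`x, x', x_n` entrywise `c`-multiplicatively close to `x̃`, the squared local norm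
`Q := Σᵢ (xᵢ − x'ᵢ)²/(x_n)ᵢ` satisfies `Q/q_c ≤ KL(x'‖x) ≤ q_c·Q`. -/
theorem stmt5 {n : ℕ} (c : ℝ) (hc : 1 ≤ c)
    (xt x x' xn : Fin n → ℝ)
    (hxt : (∀ i, 0 < xt i) ∧ ∑ i, xt i = 1)
    (hx : (∀ i, 0 < x i) ∧ ∑ i, x i = 1)
    (hx' : (∀ i, 0 < x' i) ∧ ∑ i, x' i = 1)
    (hxn : (∀ i, 0 < xn i) ∧ ∑ i, xn i = 1)
    (hcx : ∀ i, xt i / c ≤ x i ∧ x i ≤ c * xt i)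
    (hcx' : ∀ i, xt i / c ≤ x' i ∧ x' i ≤ c * xt i)
    (hcxn : ∀ i, xt i / c ≤ xn i ∧ xn i ≤ c * xt i) :
    (∑ i, (x i - x' i) ^ 2 / xn i) / qc c ≤ ∑ i, x' i * Real.log (x' i / x i)
      ∧ ∑ i, x' i * Real.log (x' i / x i) ≤ qc c * ∑ i, (x i - x' i) ^ 2 / xn i := by
  have hc0 : 0 < c := lt_of_lt_of_le one_pos hc
  have hK : 0 < c ^ 4 := by positivity
  have hIK : 0 < Ifun (c ^ 4) := Ifun_pos hK
  have hqc_pos : 0 < qc c := by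
    rw [qc_eq]
    exact mul_pos (by positivity) (lt_of_lt_of_le (inv_pos.2 hIK) (le_max_left _ _))
  -- per-index bounds
  have hper : ∀ i, (x i - x' i) ^ 2 / xn i ≤
        qc c * (x' i * Real.log (x' i / x i) - (x' i - x i)) ∧
      x' i * Real.log (x' i / x i) - (x' i - x i) ≤
        qc c * ((x i - x' i) ^ 2 / xn i) := by
    intro i
    have hxti := hxt.1 i
    have hxi := hx.1 i
    have hx'i := hx'.1 i
    have hxni := hxn.1 i
    obtain ⟨h1, h2⟩ := hcx i
    obtain ⟨h3, h4⟩ := hcx' i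
    obtain ⟨h5, h6⟩ := hcxn i
    have h1' : xt i ≤ x i * c := (div_le_iff₀ hc0).1 h1
    have h3' : xt i ≤ x' i * c := (div_le_iff₀ hc0).1 h3
    have h5' : xt i ≤ xn i * c := (div_le_iff₀ hc0).1 h5
    have hc2 : (1:ℝ) ≤ c ^ 2 := one_le_pow₀ hc
    apply per_index c (x i) (x' i) (xn i) hc hxi hx'i hxni
    · -- x' i ≤ c ^ 4 * x i
      nlinarith [mul_le_mul_of_nonneg_left h1' hc0.le,
        mul_nonneg (mul_nonneg (sq_nonneg c) hxi.le) (by linarith : (0:ℝ) ≤ c ^ 2 - 1)]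
    · -- x i ≤ c ^ 4 * x' i
      nlinarith [mul_le_mul_of_nonneg_left h3' hc0.le,
        mul_nonneg (mul_nonneg (sq_nonneg c) hx'i.le) (by linarith : (0:ℝ) ≤ c ^ 2 - 1)]
    · -- x i ≤ c ^ 2 * xn i
      nlinarith [mul_le_mul_of_nonneg_left h5' hc0.le]
    · -- xn i ≤ c ^ 2 * x i
      nlinarith [mul_le_mul_of_nonneg_left h1' hc0.le]
  -- KL equals sum of the per-index terms
  have hKL : ∑ i, x' i * Real.log (x' i / x i) =
      ∑ i, (x' i * Real.log (x' i / x i) - (x' i - x i)) := by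
    rw [Finset.sum_sub_distrib, Finset.sum_sub_distrib, hx'.2, hx.2]
    ring
  constructor
  · rw [div_le_iff₀ hqc_pos, hKL]
    have h := Finset.sum_le_sum (s := Finset.univ) (fun i _ => (hper i).1)
    rw [← Finset.mul_sum] at h
    calc ∑ i, (x i - x' i) ^ 2 / xn i
        ≤ qc c * ∑ i, (x' i * Real.log (x' i / x i) - (x' i - x i)) := h
      _ = (∑ i, (x' i * Real.log (x' i / x i) - (x' i - x i))) * qc c := mul_comm _ _
  · rw [hKL]
    have h := Finset.sum_le_sum (s := Finset.univ) (fun i _ => (hper i).2)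
    rw [← Finset.mul_sum] at h
    exact h
end

section
/- Let m, n ≥ 1 and A ∈ ℝ^{m×n} with max_{i,j} |A_{ij}| ≤ 1. Let ε > 0 and 0 < ν ≤ min{ε, 1}/(8·max{m, n}). Suppose (x', y') ∈ Δ^n_ν × Δ^m_ν is an ε/2-approximate saddle point of the truncated problem, i.e. max_{y ∈ Δ^m_ν} yᵀ A x' − min_{x ∈ Δ^n_ν} y'ᵀ A x ≤ ε/2. Then (x', y') is an ε-approximate saddle point of the full problem: max_{y ∈ Δ^m} yᵀ A x' − min_{x ∈ Δ^n} y'ᵀ A x ≤ ε. -/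
open Matrix
set_option maxHeartbeats 800000

lemma stmt8_abs_dot_le {m n : ℕ} (A : Matrix (Fin m) (Fin n) ℝ)
    (hA : ∀ i j, |A i j| ≤ 1) (y : Fin m → ℝ) (x : Fin n → ℝ) :
    |y ⬝ᵥ A.mulVec x| ≤ (∑ i, |y i|) * (∑ j, |x j|) := by
  simp only [dotProduct, Matrix.mulVec, dotProduct]
  calc |∑ i, y i * ∑ j, A i j * x j| ≤ ∑ i, |y i * ∑ j, A i j * x j| :=
        Finset.abs_sum_le_sum_abs _ _
    _ ≤ ∑ i, |y i| * ∑ j, |x j| := by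
        apply Finset.sum_le_sum; intro i _
        rw [abs_mul]
        apply mul_le_mul_of_nonneg_left _ (abs_nonneg _)
        calc |∑ j, A i j * x j| ≤ ∑ j, |A i j * x j| := Finset.abs_sum_le_sum_abs _ _
          _ ≤ ∑ j, |x j| := by
              apply Finset.sum_le_sum; intro j _
              rw [abs_mul]
              calc |A i j| * |x j| ≤ 1 * |x j| := by gcongr; exact hA i j
                _ = |x j| := one_mul _
    _ = (∑ i, |y i|) * (∑ j, |x j|) := by rw [← Finset.sum_mul]

/-- Truncation for ℓ₁-ℓ₁ games: if `‖A‖_max ≤ 1`,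
`0 < ν ≤ min{ε,1}/(8·max{m,n})`, and `(x', y')` is an ε/2-saddle point of the
truncated problem over `Δ^n_ν × Δ^m_ν`, then it is an ε-saddle point of the full
problem over `Δ^n × Δ^m`. -/
theorem stmt8 {m n : ℕ} (hm : 1 ≤ m) (hn : 1 ≤ n)
    (A : Matrix (Fin m) (Fin n) ℝ) (hA : ∀ i j, |A i j| ≤ 1)
    (ε ν : ℝ) (hε : 0 < ε) (hν : 0 < ν)
    (hν' : ν ≤ min ε 1 / (8 * max (m : ℝ) (n : ℝ)))
    (x' : Fin n → ℝ) (y' : Fin m → ℝ)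
    (hx' : (∀ j, ν ≤ x' j) ∧ ∑ j, x' j = 1)
    (hy' : (∀ i, ν ≤ y' i) ∧ ∑ i, y' i = 1)
    (happrox :
      sSup ((fun y : Fin m → ℝ => y ⬝ᵥ A.mulVec x') ''
              {y | (∀ i, ν ≤ y i) ∧ ∑ i, y i = 1})
        - sInf ((fun x : Fin n → ℝ => y' ⬝ᵥ A.mulVec x) ''
              {x | (∀ j, ν ≤ x j) ∧ ∑ j, x j = 1}) ≤ ε / 2) :
    sSup ((fun y : Fin m → ℝ => y ⬝ᵥ A.mulVec x') ''
            {y | (∀ i, 0 ≤ y i) ∧ ∑ i, y i = 1})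
      - sInf ((fun x : Fin n → ℝ => y' ⬝ᵥ A.mulVec x) ''
            {x | (∀ j, 0 ≤ x j) ∧ ∑ j, x j = 1}) ≤ ε := by
  obtain ⟨hx'ν, hx's⟩ := hx'
  obtain ⟨hy'ν, hy's⟩ := hy'
  have hm1 : (1 : ℝ) ≤ (m : ℝ) := by exact_mod_cast hm
  have hn1 : (1 : ℝ) ≤ (n : ℝ) := by exact_mod_cast hn
  have hM : (0 : ℝ) < max (m : ℝ) (n : ℝ) := lt_of_lt_of_le one_pos (le_max_of_le_left hm1)
  have hmin : (0 : ℝ) < min ε 1 := lt_min hε one_pos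
  have h8 : ν * (8 * max (m : ℝ) (n : ℝ)) ≤ min ε 1 := by
    rw [← le_div_iff₀ (by positivity)]; exact hν'
  have hmν : (m : ℝ) * ν ≤ min ε 1 / 8 := by
    have := le_max_left (m : ℝ) (n : ℝ); nlinarith
  have hnν : (n : ℝ) * ν ≤ min ε 1 / 8 := by
    have := le_max_right (m : ℝ) (n : ℝ); nlinarith
  have hminε : min ε 1 ≤ ε := min_le_left _ _
  have hmin1 : min ε 1 ≤ 1 := min_le_right _ _
  -- absolute sums of x', y'
  have hx'abs : ∑ j, |x' j| = 1 := by
    rw [← hx's]; exact Finset.sum_congr rfl fun j _ => abs_of_nonneg (le_trans hν.le (hx'ν j))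
  have hy'abs : ∑ i, |y' i| = 1 := by
    rw [← hy's]; exact Finset.sum_congr rfl fun i _ => abs_of_nonneg (le_trans hν.le (hy'ν i))
  -- sets
  set Sfy := ((fun y : Fin m → ℝ => y ⬝ᵥ A.mulVec x') '' {y | (∀ i, 0 ≤ y i) ∧ ∑ i, y i = 1})
  set Sty := ((fun y : Fin m → ℝ => y ⬝ᵥ A.mulVec x') '' {y | (∀ i, ν ≤ y i) ∧ ∑ i, y i = 1})
  set Sfx := ((fun x : Fin n → ℝ => y' ⬝ᵥ A.mulVec x) '' {x | (∀ j, 0 ≤ x j) ∧ ∑ j, x j = 1})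
  set Stx := ((fun x : Fin n → ℝ => y' ⬝ᵥ A.mulVec x) '' {x | (∀ j, ν ≤ x j) ∧ ∑ j, x j = 1})
  -- boundedness of truncated image sets
  have hbddy : BddAbove Sty := by
    refine ⟨1, ?_⟩
    rintro v ⟨y, ⟨hyν, hys⟩, rfl⟩
    have hyabs : ∑ i, |y i| = 1 := by
      rw [← hys]; exact Finset.sum_congr rfl fun i _ => abs_of_nonneg (le_trans hν.le (hyν i))
    have := stmt8_abs_dot_le A hA y x'
    rw [hyabs, hx'abs, one_mul] at this
    exact le_trans (le_abs_self _) this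
  have hbddx : BddBelow Stx := by
    refine ⟨-1, ?_⟩
    rintro v ⟨x, ⟨hxν, hxs⟩, rfl⟩
    have hxabs : ∑ j, |x j| = 1 := by
      rw [← hxs]; exact Finset.sum_congr rfl fun j _ => abs_of_nonneg (le_trans hν.le (hxν j))
    have := stmt8_abs_dot_le A hA y' x
    rw [hy'abs, hxabs, one_mul] at this
    exact neg_le_of_abs_le this
  -- nonemptiness of full image sets
  have hm0 : (m : ℝ) ≠ 0 := by positivity
  have hn0 : (n : ℝ) ≠ 0 := by positivity
  have hfySome : ((fun i : Fin m => (m : ℝ)⁻¹) ∈ {y : Fin m → ℝ | (∀ i, 0 ≤ y i) ∧ ∑ i, y i = 1}) := by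
    constructor
    · intro i; positivity
    · simp [Finset.sum_const, Finset.card_univ, hm0]
  have hfxSome : ((fun j : Fin n => (n : ℝ)⁻¹) ∈ {x : Fin n → ℝ | (∀ j, 0 ≤ x j) ∧ ∑ j, x j = 1}) := by
    constructor
    · intro j; positivity
    · simp [Finset.sum_const, Finset.card_univ, hn0]
  have hSfy_ne : Sfy.Nonempty := ⟨_, Set.mem_image_of_mem _ hfySome⟩
  have hSfx_ne : Sfx.Nonempty := ⟨_, Set.mem_image_of_mem _ hfxSome⟩
  -- Step 1: sSup Sfy ≤ sSup Sty + ε/4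
  have step1 : sSup Sfy ≤ sSup Sty + ε / 4 := by
    apply csSup_le hSfy_ne
    rintro v ⟨y, ⟨hy0, hys⟩, rfl⟩
    set yt : Fin m → ℝ := fun i => (1 - (m : ℝ) * ν) * y i + ν with hyt
    have hcoef : (0 : ℝ) ≤ 1 - (m : ℝ) * ν := by nlinarith
    have hytmem : yt ∈ {y : Fin m → ℝ | (∀ i, ν ≤ y i) ∧ ∑ i, y i = 1} := by
      constructor
      · intro i
        have : 0 ≤ (1 - (m : ℝ) * ν) * y i := mul_nonneg hcoef (hy0 i)
        simp only [hyt]; linarith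
      · simp only [hyt]
        rw [Finset.sum_add_distrib, ← Finset.mul_sum, hys, Finset.sum_const, Finset.card_univ]
        simp
    have hdiff : |(yt - y) ⬝ᵥ A.mulVec x'| ≤ ε / 4 := by
      have h1 : ∑ i, |yt i - y i| ≤ 2 * ((m : ℝ) * ν) := by
        have : ∀ i : Fin m, |yt i - y i| ≤ ν + (m : ℝ) * ν * y i := by
          intro i
          have : yt i - y i = ν - (m : ℝ) * ν * y i := by simp only [hyt]; ring
          rw [this]
          have h2 : 0 ≤ (m : ℝ) * ν * y i := by
            exact mul_nonneg (by positivity) (hy0 i)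
          rw [abs_sub_comm, abs_sub_le_iff]
          constructor <;> nlinarith
        calc ∑ i, |yt i - y i| ≤ ∑ i, (ν + (m : ℝ) * ν * y i) :=
              Finset.sum_le_sum fun i _ => this i
          _ = (m : ℝ) * ν + (m : ℝ) * ν * 1 := by
              rw [Finset.sum_add_distrib, ← Finset.mul_sum, hys, Finset.sum_const,
                Finset.card_univ]
              simp [mul_comm]
          _ = 2 * ((m : ℝ) * ν) := by ring
      have := stmt8_abs_dot_le A hA (yt - y) x'
      rw [hx'abs, mul_one] at this
      have h3 : (∑ i, |(yt - y) i|) = ∑ i, |yt i - y i| := rfl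
      rw [h3] at this
      have : |(yt - y) ⬝ᵥ A.mulVec x'| ≤ 2 * ((m : ℝ) * ν) := le_trans this h1
      nlinarith
    have hsplit : yt ⬝ᵥ A.mulVec x' - y ⬝ᵥ A.mulVec x' = (yt - y) ⬝ᵥ A.mulVec x' := by
      rw [sub_dotProduct]
    have hle : yt ⬝ᵥ A.mulVec x' ≤ sSup Sty :=
      le_csSup hbddy (Set.mem_image_of_mem _ hytmem)
    have := abs_le.mp hdiff
    linarith [this.1, this.2]
  -- Step 2: sInf Stx - ε/4 ≤ sInf Sfx
  have step2 : sInf Stx - ε / 4 ≤ sInf Sfx := by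
    apply le_csInf hSfx_ne
    rintro v ⟨x, ⟨hx0, hxs⟩, rfl⟩
    set xt : Fin n → ℝ := fun j => (1 - (n : ℝ) * ν) * x j + ν with hxt
    have hcoef : (0 : ℝ) ≤ 1 - (n : ℝ) * ν := by nlinarith
    have hxtmem : xt ∈ {x : Fin n → ℝ | (∀ j, ν ≤ x j) ∧ ∑ j, x j = 1} := by
      constructor
      · intro j
        have : 0 ≤ (1 - (n : ℝ) * ν) * x j := mul_nonneg hcoef (hx0 j)
        simp only [hxt]; linarith
      · simp only [hxt]
        rw [Finset.sum_add_distrib, ← Finset.mul_sum, hxs, Finset.sum_const, Finset.card_univ]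
        simp
    have hdiff : |y' ⬝ᵥ A.mulVec (xt - x)| ≤ ε / 4 := by
      have h1 : ∑ j, |xt j - x j| ≤ 2 * ((n : ℝ) * ν) := by
        have : ∀ j : Fin n, |xt j - x j| ≤ ν + (n : ℝ) * ν * x j := by
          intro j
          have : xt j - x j = ν - (n : ℝ) * ν * x j := by simp only [hxt]; ring
          rw [this]
          have h2 : 0 ≤ (n : ℝ) * ν * x j := mul_nonneg (by positivity) (hx0 j)
          rw [abs_sub_comm, abs_sub_le_iff]
          constructor <;> nlinarith
        calc ∑ j, |xt j - x j| ≤ ∑ j, (ν + (n : ℝ) * ν * x j) :=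
              Finset.sum_le_sum fun j _ => this j
          _ = (n : ℝ) * ν + (n : ℝ) * ν * 1 := by
              rw [Finset.sum_add_distrib, ← Finset.mul_sum, hxs, Finset.sum_const,
                Finset.card_univ]
              simp [mul_comm]
          _ = 2 * ((n : ℝ) * ν) := by ring
      have := stmt8_abs_dot_le A hA y' (xt - x)
      rw [hy'abs, one_mul] at this
      have h3 : (∑ j, |(xt - x) j|) = ∑ j, |xt j - x j| := rfl
      rw [h3] at this
      have : |y' ⬝ᵥ A.mulVec (xt - x)| ≤ 2 * ((n : ℝ) * ν) := le_trans this h1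
      nlinarith
    have hsplit : y' ⬝ᵥ A.mulVec xt - y' ⬝ᵥ A.mulVec x = y' ⬝ᵥ A.mulVec (xt - x) := by
      rw [Matrix.mulVec_sub, dotProduct_sub]
    have hle : sInf Stx ≤ y' ⬝ᵥ A.mulVec xt :=
      csInf_le hbddx (Set.mem_image_of_mem _ hxtmem)
    have := abs_le.mp hdiff
    linarith [this.1, this.2]
  linarith
end

section
/- Let d ≥ 1, ν ∈ (0, 1/d), α > 0, θ ∈ ℝ^d, and q ∈ Δ^d_ν. Let u be the (unique) minimizer over z ∈ Δ^d_ν of the strictly convex function F(z) := θᵀ z + α·Σ_{i=1}^d z_i log(z_i/q_i). Then there exists Λ > 0 such that u_i = max{ Λ·q_i·exp(−θ_i/α), ν } for all i ∈ [d]. -/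
/-!
Perturbing a minimizer along `e_j - e_i` keeps it in the truncated simplex as long as
`u_i` stays above `ν`, so the one-sided first-order condition says that the marginal cost
`θ_i + α log (u_i / q_i)` of every coordinate strictly above `ν` is minimal among all
coordinates. Since `ν < 1/d`, some coordinate is above `ν`; calling that common minimal
marginal cost `L`, the free coordinates solve `θ_i + α log (u_i / q_i) = L` and the clamped
ones satisfy `≥ L`, which is the claimed formula with `Λ = exp (L / α)`.
-/

open Real Set Finset

theorem HasDerivWithinAt.nonneg_of_isMinOn_Icc {f : ℝ → ℝ} {f' a b : ℝ}
    (hf : HasDerivWithinAt f f' (Icc a b) a) (hab : a < b) (hmin : IsMinOn f (Icc a b) a) :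
    0 ≤ f' := by
  have hcone : b - a ∈ posTangentConeAt (Icc a b) a :=
    mem_posTangentConeAt_of_segment_subset (by rw [add_sub_cancel, segment_eq_Icc hab.le])
  have h := hmin.localize.hasFDerivWithinAt_nonneg hf.hasFDerivWithinAt hcone
  simp only [ContinuousLinearMap.toSpanSingleton_apply, smul_eq_mul] at h
  exact nonneg_of_mul_nonneg_right h (sub_pos.2 hab)

theorem hasDerivAt_mul_log_div {x c : ℝ} (hx : x ≠ 0) (hc : c ≠ 0) :
    HasDerivAt (fun y => y * log (y / c)) (log (x / c) + 1) x := by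
  have hfun : (fun y => y * log (y / c)) = fun y => y * log y - y * log c := by
    funext y
    rcases eq_or_ne y 0 with rfl | hy
    · simp
    · rw [log_div hy hc, mul_sub]
  rw [hfun, log_div hx hc]
  exact (hasDerivAt_mul_log hx).fun_sub (hasDerivAt_id' x |>.mul_const (log c)) |>.congr_deriv
    (by ring)

def truncatedSimplex (ι : Type*) [Fintype ι] (ν : ℝ) : Set (ι → ℝ) :=
  {z | (∀ i, ν ≤ z i) ∧ ∑ i, z i = 1}

section TruncatedSimplex

variable {ι : Type*} [Fintype ι] {ν : ℝ}

theorem exists_lt_of_sum_eq_one {z : ι → ℝ} (hν : Fintype.card ι * ν < 1)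
    (hz : ∑ i, z i = 1) : ∃ i, ν < z i := by
  by_contra! h
  have : ∑ i, z i ≤ ∑ _i : ι, ν := sum_le_sum fun i _ => h i
  simp only [sum_const, card_univ, nsmul_eq_mul] at this
  linarith

theorem add_smul_single_sub_single_mem_truncatedSimplex [DecidableEq ι] {u : ι → ℝ}
    (hu : u ∈ truncatedSimplex ι ν) {i j : ι} (hij : i ≠ j) {ε : ℝ} (hε : ε ∈ Icc 0 (u i - ν)) :
    u + ε • (Pi.single j 1 - Pi.single i 1) ∈ truncatedSimplex ι ν := by
  refine ⟨fun k => ?_, ?_⟩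
  · rcases eq_or_ne k i with rfl | hki
    · simpa [hij, ← sub_eq_add_neg] using (show ν ≤ u k - ε by linarith [hε.2])
    · rcases eq_or_ne k j with rfl | hkj
      · simpa [hki] using (show ν ≤ u k + ε by linarith [hu.1 k, hε.1])
      · simpa [hki, hkj] using hu.1 k
  · simp [sum_add_distrib, ← mul_sum, hu.2]

theorem le_of_isMinOn_truncatedSimplex [DecidableEq ι] {g : ι → ℝ → ℝ} {g' u : ι → ℝ}
    (hg : ∀ k, HasDerivAt (g k) (g' k) (u k)) (hu : u ∈ truncatedSimplex ι ν)
    (hmin : IsMinOn (fun z => ∑ k, g k (z k)) (truncatedSimplex ι ν) u)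
    {i j : ι} (hi : ν < u i) : g' i ≤ g' j := by
  rcases eq_or_ne i j with rfl | hij
  · rfl
  set c : ι → ℝ := Pi.single j 1 - Pi.single i 1
  have hderiv : HasDerivAt (fun ε : ℝ => ∑ k, g k ((u + ε • c) k)) (∑ k, g' k * c k) 0 := by
    refine HasDerivAt.fun_sum fun k _ => ?_
    show HasDerivAt (fun ε : ℝ => g k (u k + ε * c k)) (g' k * c k) 0
    have hline : HasDerivAt (fun ε : ℝ => u k + ε * c k) (c k) 0 := by
      simpa using ((hasDerivAt_id (0 : ℝ)).mul_const (c k)).const_add (u k)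
    have hgk : HasDerivAt (g k) (g' k) (u k + 0 * c k) := by simpa using hg k
    simpa [Function.comp_def, mul_comm] using hgk.comp 0 hline
  have hsum : ∑ k, g' k * c k = g' j - g' i := by
    simp [c, mul_sub, sum_sub_distrib, Pi.single_apply]
  have hnonneg := hderiv.hasDerivWithinAt.nonneg_of_isMinOn_Icc (sub_pos.2 hi)
    fun ε hε => by
      simpa [c] using hmin (add_smul_single_sub_single_mem_truncatedSimplex hu hij hε)
  linarith

end TruncatedSimplex

theorem eq_max_of_marginal_cost {α ν θ q x L : ℝ} (hα : 0 < α) (hq : 0 < q) (hx : 0 < x)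
    (hνx : ν ≤ x) (hle : L ≤ θ + α * log (x / q))
    (heq : ν < x → θ + α * log (x / q) = L) :
    x = max (exp (L / α) * q * exp (-θ / α)) ν := by
  set φ := θ + α * log (x / q)
  have hy : exp (L / α) * q * exp (-θ / α) = x * exp ((L - φ) / α) := by
    have hexp : L / α + -θ / α = log (x / q) + (L - φ) / α := by
      field_simp
      ring
    rw [mul_right_comm, ← exp_add, hexp, exp_add, exp_log (div_pos hx hq)]
    field_simp
  rcases hνx.lt_or_eq with hνx | rfl
  · rw [hy, heq hνx, sub_self, zero_div, exp_zero, mul_one, max_eq_left hνx.le]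
  · have : exp ((L - φ) / α) ≤ 1 := exp_le_one_iff.2 (div_nonpos_of_nonpos_of_nonneg
      (sub_nonpos.2 hle) hα.le)
    rw [hy, max_eq_right (mul_le_of_le_one_right hx.le this)]

theorem stmt9_general {d : ℕ} (ν : ℝ) (hν : 0 < ν) (hν' : ν < 1 / d)
    (α : ℝ) (hα : 0 < α) (θ : Fin d → ℝ) (q : Fin d → ℝ)
    (hq : (∀ i, ν ≤ q i) ∧ ∑ i, q i = 1)
    (u : Fin d → ℝ) (hu : (∀ i, ν ≤ u i) ∧ ∑ i, u i = 1)
    (hmin : ∀ z : Fin d → ℝ, ((∀ i, ν ≤ z i) ∧ ∑ i, z i = 1) →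
      (∑ i, θ i * u i) + α * ∑ i, u i * Real.log (u i / q i)
        ≤ (∑ i, θ i * z i) + α * ∑ i, z i * Real.log (z i / q i)) :
    ∃ Λ : ℝ, 0 < Λ ∧ ∀ i, u i = max (Λ * q i * Real.exp (-θ i / α)) ν := by
  have hupos : ∀ k, 0 < u k := fun k => hν.trans_le (hu.1 k)
  have hqpos : ∀ k, 0 < q k := fun k => hν.trans_le (hq.1 k)
  set φ : Fin d → ℝ := fun k => θ k + α * log (u k / q k)
  have hg (k : Fin d) :
      HasDerivAt (fun x => θ k * x + α * (x * log (x / q k))) (φ k + α) (u k) :=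
    ((hasDerivAt_id' _).const_mul (θ k)).fun_add
      ((hasDerivAt_mul_log_div (hupos k).ne' (hqpos k).ne').const_mul α) |>.congr_deriv
      (by ring)
  have hmin' : IsMinOn (fun z => ∑ k, (θ k * z k + α * (z k * log (z k / q k))))
      (truncatedSimplex (Fin d) ν) u := fun z hz => by
    simpa [sum_add_distrib, mul_sum] using hmin z hz
  have hφ (i j : Fin d) (hi : ν < u i) : φ i ≤ φ j := by
    simpa using le_of_isMinOn_truncatedSimplex hg hu hmin' hi
  have hcard : Fintype.card (Fin d) * ν < 1 := by
    rcases Nat.eq_zero_or_pos d with rfl | hdpos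
    · simp
    · simpa [mul_comm] using (lt_div_iff₀ (Nat.cast_pos.2 hdpos)).1 hν'
  obtain ⟨i₀, hi₀⟩ := exists_lt_of_sum_eq_one hcard hu.2
  exact ⟨exp (φ i₀ / α), exp_pos _, fun i => eq_max_of_marginal_cost hα (hqpos i) (hupos i)
    (hu.1 i) (hφ i₀ i hi₀) fun hi => le_antisymm (hφ i i₀ hi) (hφ i₀ i hi₀)⟩

/-- Characterization of the KL-prox step on the truncated simplex:
if `u` minimizes `z ↦ θᵀz + α·Σᵢ zᵢ log(zᵢ/qᵢ)` over `Δ^d_ν`, then there exists `Λ > 0`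
with `uᵢ = max{Λ·qᵢ·exp(−θᵢ/α), ν}` for all `i`. -/
theorem stmt9 {d : ℕ} (hd : 1 ≤ d) (ν : ℝ) (hν : 0 < ν) (hν' : ν < 1 / d)
    (α : ℝ) (hα : 0 < α) (θ : Fin d → ℝ) (q : Fin d → ℝ)
    (hq : (∀ i, ν ≤ q i) ∧ ∑ i, q i = 1)
    (u : Fin d → ℝ) (hu : (∀ i, ν ≤ u i) ∧ ∑ i, u i = 1)
    (hmin : ∀ z : Fin d → ℝ, ((∀ i, ν ≤ z i) ∧ ∑ i, z i = 1) →
      (∑ i, θ i * u i) + α * ∑ i, u i * Real.log (u i / q i)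
        ≤ (∑ i, θ i * z i) + α * ∑ i, z i * Real.log (z i / q i)) :
    ∃ Λ : ℝ, 0 < Λ ∧ ∀ i, u i = max (Λ * q i * Real.exp (-θ i / α)) ν :=
  stmt9_general ν hν hν' α hα θ q hq u hu hmin
end

section
/- Let d ≥ 1, ν ∈ (0, 1/d), α > 0, θ, ξ ∈ ℝ^d, and q ∈ Δ^d_ν. Let u_θ be the minimizer over z ∈ Δ^d_ν of θᵀ z + α·Σ_{i=1}^d z_i log(z_i/q_i), and let u_ξ be the minimizer over z ∈ Δ^d_ν of ξᵀ z + α·Σ_{i=1}^d z_i log(z_i/q_i). Then with δ := exp(2‖θ − ξ‖_∞ / α), for every i ∈ [d] one has (u_θ)_i / δ ≤ (u_ξ)_i ≤ δ·(u_θ)_i. -/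
/-!
Mass can be moved between two coordinates of a point of `Δ^d_ν` as long as the donor is strictly
above `ν`. Since `t ↦ t log (t / c)` is convex, moving mass `ε` from `j` to `i` changes the
objective by at most `ε` times the difference of the marginals `θₖ + α log (zₖ / qₖ)` at the
shifted point; letting `ε → 0` at a minimizer `a` shows that the marginal at `i` is at least the
one at `j` whenever `aⱼ > ν`.

If `bᵢ > δ aᵢ`, some `j ≠ i` has `bⱼ < aⱼ`, so `aⱼ > ν` and `bᵢ > ν`. Adding the two resulting
marginal inequalities (for `a` from `j` to `i`, for `b` from `i` to `j`) gives
`α log (bᵢ / aᵢ) + α log (aⱼ / bⱼ) ≤ (θᵢ - ξᵢ) - (θⱼ - ξⱼ) ≤ 2 ‖θ - ξ‖`, contradicting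
`α log (bᵢ / aᵢ) > 2 ‖θ - ξ‖` and `aⱼ > bⱼ`.
-/

open Real Finset Filter Topology

section
variable {ι : Type*} [Fintype ι]

theorem Fintype.sum_apply_update [DecidableEq ι] (G : ι → ℝ → ℝ) (z : ι → ℝ) (i : ι) (x : ℝ) :
    ∑ k, G k (Function.update z i x k) = ∑ k, G k (z k) + (G i x - G i (z i)) := by
  simp_rw [Function.apply_update G z i x]
  rw [Finset.sum_update_of_mem (mem_univ i), Fintype.sum_eq_add_sum_compl i]
  simp only [sdiff_eq_inter_compl, univ_inter]
  ring

theorem Fintype.exists_ne_lt_of_sum_eq {a b : ι → ℝ} (h : ∑ k, a k = ∑ k, b k) {i : ι}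
    (hi : a i < b i) : ∃ j, j ≠ i ∧ b j < a j := by
  by_contra! hle
  have : ∑ k, a k < ∑ k, b k :=
    Finset.sum_lt_sum (fun k _ => (eq_or_ne k i).elim (· ▸ hi.le) (hle k)) ⟨i, mem_univ i, hi⟩
  exact this.ne h

theorem mul_log_div_sub_mul_log_div_le {x y c : ℝ} (hx : 0 < x) (hy : 0 < y) (hc : 0 < c) :
    y * log (y / c) - x * log (x / c) ≤ (y - x) * (log (y / c) + 1) := by
  have hlog : log (x / c) = log (y / c) - log (y / x) := by
    rw [log_div hx.ne' hc.ne', log_div hy.ne' hc.ne', log_div hy.ne' hx.ne']; ring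
  have htangent : x * log (y / x) ≤ y - x := by
    have := mul_le_mul_of_nonneg_left (log_le_sub_one_of_pos (div_pos hy hx)) hx.le
    rwa [mul_sub, mul_div_cancel₀ _ hx.ne', mul_one] at this
  rw [hlog]
  linarith

def truncSimplex (ν : ℝ) : Set (ι → ℝ) := {z | (∀ i, ν ≤ z i) ∧ ∑ i, z i = 1}

noncomputable def klObjective (α : ℝ) (θ q z : ι → ℝ) : ℝ :=
  ∑ i, θ i * z i + α * ∑ i, z i * log (z i / q i)

/-- The partial derivative `∂ᵢ (klObjective α θ q) z`, minus the constant `α`. -/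
noncomputable def klMarginal (α : ℝ) (θ q z : ι → ℝ) (i : ι) : ℝ := θ i + α * log (z i / q i)

section shiftMass
variable [DecidableEq ι] {i j : ι}

def shiftMass (z : ι → ℝ) (i j : ι) (ε : ℝ) : ι → ℝ :=
  Function.update (Function.update z i (z i + ε)) j (z j - ε)

theorem sum_apply_shiftMass (G : ι → ℝ → ℝ) (z : ι → ℝ) (hij : i ≠ j) (ε : ℝ) :
    ∑ k, G k (shiftMass z i j ε k)
      = ∑ k, G k (z k) + (G i (z i + ε) - G i (z i)) + (G j (z j - ε) - G j (z j)) := by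
  rw [shiftMass, Fintype.sum_apply_update, Fintype.sum_apply_update,
    Function.update_of_ne hij.symm]

theorem shiftMass_mem_truncSimplex {ν ε : ℝ} {z : ι → ℝ} (hz : z ∈ truncSimplex ν)
    (hij : i ≠ j) (hε : 0 ≤ ε) (hεj : ε ≤ z j - ν) : shiftMass z i j ε ∈ truncSimplex ν := by
  refine ⟨fun k => ?_, ?_⟩
  · simp only [shiftMass, Function.update_apply]
    split_ifs
    · linarith
    · linarith [hz.1 i]
    · exact hz.1 k
  · rw [sum_apply_shiftMass (fun _ t => t) z hij, hz.2]
    ring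

theorem klObjective_shiftMass_sub_le {α ε : ℝ} {θ q z : ι → ℝ} (hα : 0 ≤ α)
    (hq : ∀ k, 0 < q k) (hij : i ≠ j) (hε : 0 ≤ ε) (hzi : 0 < z i) (hzj : ε < z j) :
    klObjective α θ q (shiftMass z i j ε) - klObjective α θ q z
      ≤ ε * (θ i - θ j + α * (log ((z i + ε) / q i) - log ((z j - ε) / q j))) := by
  have hi := mul_log_div_sub_mul_log_div_le hzi (by linarith : 0 < z i + ε) (hq i)
  have hj := mul_log_div_sub_mul_log_div_le (hε.trans_lt hzj) (sub_pos.2 hzj) (hq j)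
  have hentropy := mul_le_mul_of_nonneg_left (add_le_add hi hj) hα
  rw [klObjective, klObjective, sum_apply_shiftMass (fun k t => θ k * t) z hij,
    sum_apply_shiftMass (fun k t => t * log (t / q k)) z hij]
  linarith

end shiftMass

theorem IsMinOn.klMarginal_le [DecidableEq ι] {ν α : ℝ} {θ q a : ι → ℝ} {i j : ι}
    (hmin : IsMinOn (klObjective α θ q) (truncSimplex ν) a) (ha : a ∈ truncSimplex ν)
    (hν : 0 < ν) (hα : 0 ≤ α) (hq : ∀ k, 0 < q k) (hij : i ≠ j) (hj : ν < a j) :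
    klMarginal α θ q a j ≤ klMarginal α θ q a i := by
  have hpos : ∀ k, 0 < a k := fun k => hν.trans_le (ha.1 k)
  let slope : ℝ → ℝ := fun ε => θ i - θ j + α * (log ((a i + ε) / q i) - log ((a j - ε) / q j))
  have hslope : ContinuousAt slope 0 := by
    have := hpos i; have := hpos j; have := hq i; have := hq j
    fun_prop (disch := simp only [add_zero, sub_zero]; positivity)
  have hslope_nonneg : ∀ᶠ ε in 𝓝[>] 0, 0 ≤ slope ε := by
    filter_upwards [Ioo_mem_nhdsGT (sub_pos.2 hj)] with ε ⟨hε, hεj⟩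
    have hopt := isMinOn_iff.1 hmin _ (shiftMass_mem_truncSimplex ha hij hε.le hεj.le)
    have hchange := klObjective_shiftMass_sub_le (θ := θ) hα hq hij hε.le (hpos i) (by linarith)
    exact nonneg_of_mul_nonneg_right (by linarith) hε
  have hlimit := ge_of_tendsto (hslope.tendsto.mono_left nhdsWithin_le_nhds) hslope_nonneg
  simp only [slope, add_zero, sub_zero] at hlimit
  simp only [klMarginal]
  linarith

theorem le_exp_mul_of_isMinOn [DecidableEq ι] {ν α : ℝ} {θ ξ q a b : ι → ℝ}
    (hν : 0 < ν) (hα : 0 < α) (hq : ∀ k, 0 < q k)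
    (ha : a ∈ truncSimplex ν) (hb : b ∈ truncSimplex ν)
    (hmina : IsMinOn (klObjective α θ q) (truncSimplex ν) a)
    (hminb : IsMinOn (klObjective α ξ q) (truncSimplex ν) b) (i : ι) :
    b i ≤ exp (2 * ‖θ - ξ‖ / α) * a i := by
  by_contra! hlt
  have hapos : ∀ k, 0 < a k := fun k => hν.trans_le (ha.1 k)
  have hbpos : ∀ k, 0 < b k := fun k => hν.trans_le (hb.1 k)
  have hab : a i < b i :=
    (le_mul_of_one_le_left (hapos i).le (one_le_exp (by positivity))).trans_lt hlt
  obtain ⟨j, hji, hbaj⟩ := Fintype.exists_ne_lt_of_sum_eq (ha.2.trans hb.2.symm) hab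
  have hθ := hmina.klMarginal_le ha hν hα.le hq hji.symm ((hb.1 j).trans_lt hbaj)
  have hξ := hminb.klMarginal_le hb hν hα.le hq hji ((ha.1 i).trans_lt hab)
  have hratio : 2 * ‖θ - ξ‖ / α < log (b i / a i) :=
    (lt_log_iff_exp_lt (div_pos (hbpos i) (hapos i))).2 ((lt_div_iff₀ (hapos i)).2 hlt)
  have hlog_i : log (b i / q i) = log (b i / a i) + log (a i / q i) := by
    rw [← log_mul (div_pos (hbpos i) (hapos i)).ne' (div_pos (hapos i) (hq i)).ne',
      div_mul_div_cancel₀ (hapos i).ne']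
  have hlog_j : log (b j / q j) < log (a j / q j) :=
    log_lt_log (div_pos (hbpos j) (hq j)) (div_lt_div_of_pos_right hbaj (hq j))
  have hnorm_i := abs_le.1 (norm_le_pi_norm (θ - ξ) i)
  have hnorm_j := abs_le.1 (norm_le_pi_norm (θ - ξ) j)
  simp only [klMarginal, Pi.sub_apply] at hθ hξ hnorm_i hnorm_j
  rw [hlog_i, mul_add] at hξ
  linarith [(div_lt_iff₀' hα).1 hratio, mul_lt_mul_of_pos_left hlog_j hα]

end

theorem stmt10_general {d : ℕ} (ν : ℝ) (hν : 0 < ν)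
    (α : ℝ) (hα : 0 < α) (θ ξ : Fin d → ℝ) (q : Fin d → ℝ)
    (hq : (∀ i, ν ≤ q i) ∧ ∑ i, q i = 1)
    (uθ uξ : Fin d → ℝ)
    (huθ : (∀ i, ν ≤ uθ i) ∧ ∑ i, uθ i = 1)
    (huξ : (∀ i, ν ≤ uξ i) ∧ ∑ i, uξ i = 1)
    (hminθ : ∀ z : Fin d → ℝ, ((∀ i, ν ≤ z i) ∧ ∑ i, z i = 1) →
      (∑ i, θ i * uθ i) + α * ∑ i, uθ i * Real.log (uθ i / q i)
        ≤ (∑ i, θ i * z i) + α * ∑ i, z i * Real.log (z i / q i))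
    (hminξ : ∀ z : Fin d → ℝ, ((∀ i, ν ≤ z i) ∧ ∑ i, z i = 1) →
      (∑ i, ξ i * uξ i) + α * ∑ i, uξ i * Real.log (uξ i / q i)
        ≤ (∑ i, ξ i * z i) + α * ∑ i, z i * Real.log (z i / q i)) :
    ∀ i, uθ i / Real.exp (2 * ‖θ - ξ‖ / α) ≤ uξ i
      ∧ uξ i ≤ Real.exp (2 * ‖θ - ξ‖ / α) * uθ i := by
  have hqpos : ∀ k, 0 < q k := fun k => hν.trans_le (hq.1 k)
  have hθ : IsMinOn (klObjective α θ q) (truncSimplex ν) uθ := isMinOn_iff.2 hminθ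
  have hξ : IsMinOn (klObjective α ξ q) (truncSimplex ν) uξ := isMinOn_iff.2 hminξ
  intro i
  refine ⟨?_, le_exp_mul_of_isMinOn hν hα hqpos huθ huξ hθ hξ i⟩
  rw [div_le_iff₀ (exp_pos _), mul_comm, norm_sub_rev]
  exact le_exp_mul_of_isMinOn hν hα hqpos huξ huθ hξ hθ i

/-- If `u_θ` and `u_ξ` minimize `z ↦ θᵀz + α·KL(z‖q)` resp.
`z ↦ ξᵀz + α·KL(z‖q)` over the truncated simplex `Δ^d_ν`, then with
`δ := exp(2‖θ − ξ‖_∞/α)` one has `(u_θ)ᵢ/δ ≤ (u_ξ)ᵢ ≤ δ·(u_θ)ᵢ` for all `i`.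
(The ℓ∞-norm is the sup norm `‖θ - ξ‖` of the function type `Fin d → ℝ`.) -/
theorem stmt10 {d : ℕ} (hd : 1 ≤ d) (ν : ℝ) (hν : 0 < ν) (hν' : ν < 1 / d)
    (α : ℝ) (hα : 0 < α) (θ ξ : Fin d → ℝ) (q : Fin d → ℝ)
    (hq : (∀ i, ν ≤ q i) ∧ ∑ i, q i = 1)
    (uθ uξ : Fin d → ℝ)
    (huθ : (∀ i, ν ≤ uθ i) ∧ ∑ i, uθ i = 1)
    (huξ : (∀ i, ν ≤ uξ i) ∧ ∑ i, uξ i = 1)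
    (hminθ : ∀ z : Fin d → ℝ, ((∀ i, ν ≤ z i) ∧ ∑ i, z i = 1) →
      (∑ i, θ i * uθ i) + α * ∑ i, uθ i * Real.log (uθ i / q i)
        ≤ (∑ i, θ i * z i) + α * ∑ i, z i * Real.log (z i / q i))
    (hminξ : ∀ z : Fin d → ℝ, ((∀ i, ν ≤ z i) ∧ ∑ i, z i = 1) →
      (∑ i, ξ i * uξ i) + α * ∑ i, uξ i * Real.log (uξ i / q i)
        ≤ (∑ i, ξ i * z i) + α * ∑ i, z i * Real.log (z i / q i)) :
    ∀ i, uθ i / Real.exp (2 * ‖θ - ξ‖ / α) ≤ uξ i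
      ∧ uξ i ≤ Real.exp (2 * ‖θ - ξ‖ / α) * uθ i :=
  stmt10_general ν hν α hα θ ξ q hq uθ uξ huθ huξ hminθ hminξ
end

section
/- Let ε, β, Γ > 0, c > 0, and let K ≥ 1 be a natural number. Let α_1, …, α_K > 0 and d_1, …, d_K ≥ 0 be real numbers such that: (i) Σ_{k=1}^{K−1} α_k⁻¹ < Γ/ε; (ii) Σ_{k=1}^{K} d_k ≤ Γ; and (iii) for every k ∈ {1,…,K}, either α_k = β or d_k ≥ α_k^c. Then K ≤ (β/ε + ε^{−c/(c+1)})·Γ + 2. -/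
/-!
A step with `α k = β` costs `β / α k = 1` in `∑ (α k)⁻¹`. Any other step uses either a small
`α k`, which is costly in `∑ (α k)⁻¹`, or a large one, for which the movement `d k ≥ (α k) ^ c`
is costly in `∑ d k`. Young's inequality `c + 1 ≤ c t / a + (a / t) ^ c` at the scale
`t = ε ^ (1 / (c + 1))` weighs the two budgets so that each of the first `K - 1` steps costs at
least `c + 1` of `((c + 1) β + c t) ∑ (α k)⁻¹ + t ^ (-c) ∑ d k`, which is at most
`(c + 1) (β / ε + ε ^ (-c / (c + 1))) Γ`.
-/

open Finset

/-- Young's inequality for the exponents `c + 1` and `(c + 1) / c`, in the form given by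
Bernoulli's inequality `u ^ (c + 1) ≥ 1 + (c + 1) (u - 1)`. -/
lemma add_one_le_mul_inv_add_rpow {c u : ℝ} (hc : 0 ≤ c) (hu : 0 < u) :
    c + 1 ≤ c * u⁻¹ + u ^ c := by
  have hbern : 1 + (c + 1) * (u - 1) ≤ u ^ (c + 1) := by
    simpa using one_add_mul_self_le_rpow_one_add (s := u - 1) (by linarith) (by linarith : 1 ≤ c + 1)
  rw [Real.rpow_add_one hu.ne'] at hbern
  refine le_of_mul_le_mul_right ?_ hu
  rw [add_mul, add_mul (c * u⁻¹), inv_mul_cancel_right₀ hu.ne']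
  linarith

lemma add_one_le_div_add_div_rpow {β c t a d : ℝ} (hβ : 0 ≤ β) (hc : 0 ≤ c) (ht : 0 < t)
    (ha : 0 < a) (hd : 0 ≤ d) (h : a = β ∨ a ^ c ≤ d) :
    c + 1 ≤ ((c + 1) * β + c * t) / a + d / t ^ c := by
  rw [add_div]
  rcases h with rfl | h
  · rw [mul_div_cancel_right₀ _ ha.ne']
    have : 0 ≤ c * t / a + d / t ^ c := by positivity
    linarith
  · have hyoung := add_one_le_mul_inv_add_rpow hc (div_pos ha ht)
    rw [inv_div, ← mul_div_assoc, Real.div_rpow ha.le ht.le] at hyoung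
    have : a ^ c / t ^ c ≤ d / t ^ c := by gcongr
    have : 0 ≤ (c + 1) * β / a := by positivity
    linarith

lemma card_mul_le_mul_sum_inv_add_sum_div {ι : Type*} (s : Finset ι) {C A B : ℝ} {a d : ι → ℝ}
    (h : ∀ k ∈ s, C ≤ A / a k + d k / B) :
    #s * C ≤ A * ∑ k ∈ s, (a k)⁻¹ + (∑ k ∈ s, d k) / B := by
  simpa only [nsmul_eq_mul, sum_add_distrib, div_eq_mul_inv _ (a _), ← mul_sum, ← sum_div]
    using card_nsmul_le_sum _ _ _ h

lemma add_one_mul_div_add_div_rpow_eq {ε β Γ c : ℝ} (hε : 0 < ε) (hc : c + 1 ≠ 0) :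
    ((c + 1) * β + c * ε ^ (1 / (c + 1))) * (Γ / ε) + Γ / (ε ^ (1 / (c + 1))) ^ c
      = (β / ε + ε ^ (-(c / (c + 1)))) * Γ * (c + 1) := by
  have hpow : (ε ^ (1 / (c + 1))) ^ c = (ε ^ (-(c / (c + 1))))⁻¹ := by
    rw [← Real.rpow_mul hε.le, ← Real.rpow_neg hε.le]; ring_nf
  have hexp : 1 / (c + 1) = 1 + -(c / (c + 1)) := by field_simp; ring
  rw [hpow, hexp, Real.rpow_add hε, Real.rpow_one]
  field_simp
  ring

theorem stmt14_general (ε β Γ c : ℝ) (hε : 0 < ε) (hβ : 0 < β) (hc : 0 < c)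
    (K : ℕ) (α d : ℕ → ℝ)
    (hα : ∀ k ∈ Finset.Icc 1 K, 0 < α k)
    (hd : ∀ k ∈ Finset.Icc 1 K, 0 ≤ d k)
    (h1 : ∑ k ∈ Finset.Icc 1 (K - 1), (α k)⁻¹ < Γ / ε)
    (h2 : ∑ k ∈ Finset.Icc 1 K, d k ≤ Γ)
    (h3 : ∀ k ∈ Finset.Icc 1 K, α k = β ∨ (α k) ^ c ≤ d k) :
    (K : ℝ) ≤ (β / ε + ε ^ (-(c / (c + 1)))) * Γ + 2 := by
  have ht : 0 < ε ^ (1 / (c + 1)) := Real.rpow_pos_of_pos hε _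
  have hsub : Icc 1 (K - 1) ⊆ Icc 1 K := Icc_subset_Icc le_rfl (Nat.sub_le K 1)
  have hcost := card_mul_le_mul_sum_inv_add_sum_div _ fun k hk ↦
    add_one_le_div_add_div_rpow hβ.le hc.le ht (hα k (hsub hk)) (hd k (hsub hk)) (h3 k (hsub hk))
  have hd_sum : ∑ k ∈ Icc 1 (K - 1), d k ≤ Γ :=
    (sum_le_sum_of_subset_of_nonneg hsub fun k hk _ ↦ hd k hk).trans h2
  have hcount : #(Icc 1 (K - 1)) * (c + 1) ≤ (β / ε + ε ^ (-(c / (c + 1)))) * Γ * (c + 1) := by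
    refine (hcost.trans (add_le_add ?_ ?_)).trans_eq (add_one_mul_div_add_div_rpow_eq hε (by positivity))
      <;> gcongr
  have hcard : (K : ℝ) ≤ #(Icc 1 (K - 1)) + 1 := by
    rw [Nat.card_Icc, Nat.add_sub_cancel]; exact_mod_cast (by omega : K ≤ K - 1 + 1)
  have := le_of_mul_le_mul_right hcount (by linarith)
  linarith

/-- Iteration bound for the proximal point method with a (β, c)-kinetic
dynamic approximate proximal oracle, abstracted as a statement about finite real sequences. -/
theorem stmt14 (ε β Γ c : ℝ) (hε : 0 < ε) (hβ : 0 < β) (hΓ : 0 < Γ) (hc : 0 < c)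
    (K : ℕ) (hK : 1 ≤ K) (α d : ℕ → ℝ)
    (hα : ∀ k ∈ Finset.Icc 1 K, 0 < α k)
    (hd : ∀ k ∈ Finset.Icc 1 K, 0 ≤ d k)
    (h1 : ∑ k ∈ Finset.Icc 1 (K - 1), (α k)⁻¹ < Γ / ε)
    (h2 : ∑ k ∈ Finset.Icc 1 K, d k ≤ Γ)
    (h3 : ∀ k ∈ Finset.Icc 1 K, α k = β ∨ (α k) ^ c ≤ d k) :
    (K : ℝ) ≤ (β / ε + ε ^ (-(c / (c + 1)))) * Γ + 2 :=
  stmt14_general ε β Γ c hε hβ hc K α d hα hd h1 h2 h3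
end

section
/- Let d ≥ 1, ν ∈ (0, 1/d), γ > 0, and let u, v ∈ Δ^d_ν satisfy KL(u‖v) ≤ ½·γ²·ν². Then for every i ∈ [d], u_i/(1 + γ) ≤ v_i ≤ (1 + γ)·u_i. -/
/-!
Writing `a log (a/b) - a + b = b · klFun (a/b)` with `klFun x = x log x + 1 - x`, the second-order
bound `klFun x ≥ (x - 1)² / (2 max x 1)` (the second derivative of `klFun` is `1/x`) gives
`(a - b)² / 2 ≤ a log (a/b) - a + b` for `a, b ∈ (0, 1]`. These summands are nonnegative and sum
to `KL(u‖v)` because both vectors have mass one, so `|u_i - v_i| ≤ γν`, and `ν ≤ u_i, v_i`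
turns this additive bound into the multiplicative one.
-/

open Real Set Finset

namespace InformationTheory

lemma hasDerivAt_klFun_sub_sq_div {x : ℝ} (hx : x ≠ 0) (m : ℝ) :
    HasDerivAt (fun y ↦ klFun y - (y - 1) ^ 2 / (2 * m)) (log x - (x - 1) / m) x := by
  refine ((hasDerivAt_klFun hx).sub
    ((((hasDerivAt_id' x).sub_const 1).pow 2).div_const (2 * m))).congr_deriv ?_
  norm_num
  ring

lemma continuousOn_klFun_sub_sq_div {s : Set ℝ} (hs : s ⊆ Ioi 0) (m : ℝ) :
    ContinuousOn (fun y ↦ klFun y - (y - 1) ^ 2 / (2 * m)) s := fun _ hy ↦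
  (hasDerivAt_klFun_sub_sq_div (mem_Ioi.mp (hs hy)).ne' m).continuousAt.continuousWithinAt

lemma sq_sub_one_div_two_le_klFun {x : ℝ} (hx₀ : 0 < x) (hx₁ : x ≤ 1) :
    (x - 1) ^ 2 / 2 ≤ klFun x := by
  have hanti : AntitoneOn (fun y ↦ klFun y - (y - 1) ^ 2 / (2 * 1)) (Icc x 1) := by
    refine antitoneOn_of_hasDerivWithinAt_nonpos (f' := fun y ↦ log y - (y - 1) / 1)
      (convex_Icc x 1) (continuousOn_klFun_sub_sq_div (fun y hy ↦ hx₀.trans_le hy.1) 1)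
      (fun y hy ↦ ?_) (fun y hy ↦ ?_)
    all_goals rw [interior_Icc] at hy
    · exact (hasDerivAt_klFun_sub_sq_div (hx₀.trans hy.1).ne' 1).hasDerivWithinAt
    · simpa using log_le_sub_one_of_pos (hx₀.trans hy.1)
  have := hanti (left_mem_Icc.mpr hx₁) (right_mem_Icc.mpr hx₁) hx₁
  simpa [klFun_one] using this

lemma sq_sub_one_div_two_mul_le_klFun {x : ℝ} (hx : 1 ≤ x) :
    (x - 1) ^ 2 / (2 * x) ≤ klFun x := by
  have hmono : MonotoneOn (fun y ↦ klFun y - (y - 1) ^ 2 / (2 * x)) (Icc 1 x) := by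
    refine monotoneOn_of_hasDerivWithinAt_nonneg (f' := fun y ↦ log y - (y - 1) / x)
      (convex_Icc 1 x) (continuousOn_klFun_sub_sq_div (fun y hy ↦ one_pos.trans_le hy.1) x)
      (fun y hy ↦ ?_) (fun y hy ↦ ?_)
    all_goals rw [interior_Icc] at hy
    · exact (hasDerivAt_klFun_sub_sq_div (one_pos.trans hy.1).ne' x).hasDerivWithinAt
    · have hy₀ : 0 < y := one_pos.trans hy.1
      -- `log y ≥ 1 - 1/y = (y - 1)/y ≥ (y - 1)/x`
      have h₁ : (y - 1) / x ≤ (y - 1) / y :=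
        div_le_div_of_nonneg_left (by linarith [hy.1]) hy₀ hy.2.le
      have h₂ : (y - 1) / y = 1 - y⁻¹ := by field_simp
      linarith [one_sub_inv_le_log_of_pos hy₀]
  have := hmono (left_mem_Icc.mpr hx) (right_mem_Icc.mpr hx) hx
  simpa [klFun_one] using this

lemma mul_klFun_div {a b : ℝ} (hb : b ≠ 0) :
    b * klFun (a / b) = a * log (a / b) + b - a := by
  rw [klFun_apply]
  field_simp

lemma sq_sub_div_two_le_mul_klFun_div {a b : ℝ} (ha₀ : 0 < a) (ha₁ : a ≤ 1) (hb₀ : 0 < b)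
    (hb₁ : b ≤ 1) : (a - b) ^ 2 / 2 ≤ b * klFun (a / b) := by
  rcases le_total a b with hab | hba
  · have h := sq_sub_one_div_two_le_klFun (div_pos ha₀ hb₀) ((div_le_one hb₀).mpr hab)
    calc (a - b) ^ 2 / 2 ≤ (a - b) ^ 2 / (2 * b) := by gcongr; linarith
      _ = b * ((a / b - 1) ^ 2 / 2) := by field_simp
      _ ≤ b * klFun (a / b) := by gcongr
  · have h := sq_sub_one_div_two_mul_le_klFun ((one_le_div hb₀).mpr hba)
    calc (a - b) ^ 2 / 2 ≤ (a - b) ^ 2 / (2 * a) := by gcongr; linarith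
      _ = b * ((a / b - 1) ^ 2 / (2 * (a / b))) := by field_simp
      _ ≤ b * klFun (a / b) := by gcongr

end InformationTheory

open InformationTheory

lemma sq_sub_div_two_le_sum_mul_log {ι : Type*} [Fintype ι] {u v : ι → ℝ}
    (hu₀ : ∀ i, 0 < u i) (hv₀ : ∀ i, 0 < v i) (hu : ∑ i, u i = 1) (hv : ∑ i, v i = 1) (i : ι) :
    (u i - v i) ^ 2 / 2 ≤ ∑ j, u j * log (u j / v j) := by
  have hle_one {w : ι → ℝ} (hw₀ : ∀ i, 0 < w i) (hw : ∑ i, w i = 1) (i : ι) : w i ≤ 1 :=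
    hw ▸ single_le_sum (fun j _ ↦ (hw₀ j).le) (mem_univ i)
  have hterm (j : ι) : (u j - v j) ^ 2 / 2 ≤ v j * klFun (u j / v j) :=
    sq_sub_div_two_le_mul_klFun_div (hu₀ j) (hle_one hu₀ hu j) (hv₀ j) (hle_one hv₀ hv j)
  have hsum : ∑ j, v j * klFun (u j / v j) = ∑ j, u j * log (u j / v j) := by
    simp only [mul_klFun_div (hv₀ _).ne', sum_sub_distrib, sum_add_distrib, hu, hv,
      add_sub_cancel_right]
  calc (u i - v i) ^ 2 / 2 ≤ v i * klFun (u i / v i) := hterm i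
    _ ≤ ∑ j, v j * klFun (u j / v j) :=
        single_le_sum (fun j _ ↦ (by positivity : (0 : ℝ) ≤ _).trans (hterm j)) (mem_univ i)
    _ = ∑ j, u j * log (u j / v j) := hsum

lemma div_one_add_le_and_le_one_add_mul {a b ν γ : ℝ} (hγ : 0 ≤ γ) (ha : ν ≤ a) (hb : ν ≤ b)
    (hab : |a - b| ≤ γ * ν) : a / (1 + γ) ≤ b ∧ b ≤ (1 + γ) * a := by
  obtain ⟨h₁, h₂⟩ := abs_le.mp hab
  refine ⟨(div_le_iff₀ (by linarith)).mpr ?_, ?_⟩ <;> nlinarith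

theorem stmt19_general {d : ℕ} (ν : ℝ) (hν : 0 < ν)
    (γ : ℝ) (hγ : 0 < γ) (u v : Fin d → ℝ)
    (hu : (∀ i, ν ≤ u i) ∧ ∑ i, u i = 1)
    (hv : (∀ i, ν ≤ v i) ∧ ∑ i, v i = 1)
    (hKL : ∑ i, u i * Real.log (u i / v i) ≤ 1 / 2 * γ ^ 2 * ν ^ 2) :
    ∀ i, u i / (1 + γ) ≤ v i ∧ v i ≤ (1 + γ) * u i := by
  obtain ⟨hu_ge, hu_sum⟩ := hu
  obtain ⟨hv_ge, hv_sum⟩ := hv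
  intro i
  have hsq : (u i - v i) ^ 2 / 2 ≤ 1 / 2 * γ ^ 2 * ν ^ 2 :=
    (sq_sub_div_two_le_sum_mul_log (fun j ↦ hν.trans_le (hu_ge j))
      (fun j ↦ hν.trans_le (hv_ge j)) hu_sum hv_sum i).trans hKL
  have habs : |u i - v i| ≤ γ * ν :=
    abs_le_of_sq_le_sq (by nlinarith) (by positivity)
  exact div_one_add_le_and_le_one_add_mul hγ.le (hu_ge i) (hv_ge i) habs

/-- For `d ≥ 1`, `ν ∈ (0, 1/d)`, `γ > 0`, and `u, v` in the ν-truncated simplex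
with `KL(u‖v) ≤ ½γ²ν²`, every coordinate satisfies `u_i/(1+γ) ≤ v_i ≤ (1+γ)·u_i`. -/
theorem stmt19 {d : ℕ} (hd : 1 ≤ d) (ν : ℝ) (hν : 0 < ν) (hν' : ν < 1 / d)
    (γ : ℝ) (hγ : 0 < γ) (u v : Fin d → ℝ)
    (hu : (∀ i, ν ≤ u i) ∧ ∑ i, u i = 1)
    (hv : (∀ i, ν ≤ v i) ∧ ∑ i, v i = 1)
    (hKL : ∑ i, u i * Real.log (u i / v i) ≤ 1 / 2 * γ ^ 2 * ν ^ 2) :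
    ∀ i, u i / (1 + γ) ≤ v i ∧ v i ≤ (1 + γ) * u i :=
  stmt19_general ν hν γ hγ u v hu hv hKL
end
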